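/- arXiv:2409.18251 — 8 statements merged into one kernel-verified Lean document; each statement's English description precedes it below -/
import Mathlib

section
/- For every point z in the hyperbolic upper half-plane ℍ, the (hyperbolic) distance from z to the imaginary-axis geodesic I = {w ∈ ℍ : Re w = 0} equals arcosh(|z| / Im z), where |z| is the complex absolute value of z. (This is the angle-of-parallelism computation underlying Lemma 4 and Lemma 18 of the paper.) -/
/-!
For `w = i t` on the imaginary axis, `cosh d(z, w) = (|z|² + t²) / (2 t Im z)`. By AM–GM this is
at least `|z| / Im z`, with equality at the foot `t = |z|` of the perpendicular from `z` (the
geodesic `|w| = |z|`); since `arcosh` inverts `cosh` on `[0, ∞)` and is monotone, the distance to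
the axis is `arcosh (|z| / Im z)`.
-/

open scoped UpperHalfPlane

noncomputable def arcosh (x : ℝ) : ℝ := Real.log (x + Real.sqrt (x ^ 2 - 1))

theorem arcosh_eq_real_arcosh : arcosh = Real.arcosh := rfl

namespace UpperHalfPlane

open Real

theorem cosh_dist_of_re_eq_zero (z w : ℍ) (hw : w.re = 0) :
    cosh (dist z w) = (‖(z : ℂ)‖ ^ 2 + w.im ^ 2) / (2 * z.im * w.im) := by
  have hz := z.im_pos
  have hw' := w.im_pos
  rw [cosh_dist, Complex.dist_eq, Complex.sq_norm, Complex.sq_norm, Complex.normSq_apply,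
    Complex.normSq_apply]
  simp only [Complex.sub_re, Complex.sub_im, coe_re, coe_im, hw, sub_zero]
  field_simp
  ring

theorem norm_coe_pos (z : ℍ) : 0 < ‖(z : ℂ)‖ := norm_pos_iff.2 z.ne_zero

noncomputable def imAxisFoot (z : ℍ) : ℍ := ⟨⟨0, ‖(z : ℂ)‖⟩, z.norm_coe_pos⟩

theorem imAxisFoot_re (z : ℍ) : z.imAxisFoot.re = 0 := rfl

theorem cosh_dist_imAxisFoot (z : ℍ) : cosh (dist z z.imAxisFoot) = ‖(z : ℂ)‖ / z.im := by
  have hz := z.norm_coe_pos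
  rw [cosh_dist_of_re_eq_zero z _ z.imAxisFoot_re]
  change (_ + ‖(z : ℂ)‖ ^ 2) / (2 * z.im * ‖(z : ℂ)‖) = _
  field_simp
  ring

theorem norm_div_im_le_cosh_dist (z : ℍ) {w : ℍ} (hw : w.re = 0) :
    ‖(z : ℂ)‖ / z.im ≤ cosh (dist z w) := by
  have hz := z.im_pos
  have hw' := w.im_pos
  rw [cosh_dist_of_re_eq_zero z w hw, div_le_div_iff₀ hz (by positivity)]
  nlinarith [sq_nonneg (w.im - ‖(z : ℂ)‖)]

end UpperHalfPlane

/-- The distance in the hyperbolic upper half-plane from a point `z` to the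
imaginary-axis geodesic `{w : Re w = 0}` equals `arcosh (|z| / Im z)`. -/
theorem dist_to_imaginary_axis (z : ℍ) :
    Metric.infDist z {w : ℍ | w.re = 0} = arcosh (‖(z : ℂ)‖ / z.im) := by
  have hpos : 0 < ‖(z : ℂ)‖ / z.im := div_pos z.norm_coe_pos z.im_pos
  have hfoot : dist z z.imAxisFoot = arcosh (‖(z : ℂ)‖ / z.im) := by
    rw [arcosh_eq_real_arcosh, ← z.cosh_dist_imAxisFoot, Real.arcosh_cosh dist_nonneg]
  refine le_antisymm (hfoot ▸ Metric.infDist_le_dist_of_mem z.imAxisFoot_re)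
    ((Metric.le_infDist ⟨z.imAxisFoot, z.imAxisFoot_re⟩).2 fun w hw => ?_)
  rw [arcosh_eq_real_arcosh, ← Real.arcosh_cosh (dist_nonneg (x := z) (y := w)),
    Real.arcosh_le_arcosh hpos (Real.cosh_pos _)]
  exact z.norm_div_im_le_cosh_dist hw
end

section
/- (Lemma 4(i), hyperbolic-plane case.) Let a > 0 and t ≥ 0 be real numbers, and let z = a + i·e^{−t} ∈ ℍ. Then the hyperbolic distance from z to the imaginary-axis geodesic I satisfies t + log a + log 2 ≤ dist(z, I) ≤ t + log a + log 2 + a^{−2} e^{−2t}. -/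
open scoped UpperHalfPlane

set_option maxHeartbeats 1600000

/-- Lemma 4(i) of the paper, in the hyperbolic plane: for `a > 0`, `t ≥ 0` and
`z = a + i e^{-t}`, the distance from `z` to the imaginary-axis geodesic `I`
satisfies `t + log a + log 2 ≤ dist(z, I) ≤ t + log a + log 2 + a⁻² e^{-2t}`. -/
theorem dist_to_imaginary_axis_estimate (a t : ℝ) (ha : 0 < a) (ht : 0 ≤ t)
    (z : ℍ) (hz : (z : ℂ) = a + Real.exp (-t) * Complex.I) :
    t + Real.log a + Real.log 2 ≤ Metric.infDist z {w : ℍ | w.re = 0} ∧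
    Metric.infDist z {w : ℍ | w.re = 0} ≤
      t + Real.log a + Real.log 2 + Real.exp (-(2 * t)) / a ^ 2 := by
  set y := Real.exp (-t) with hy
  have hy0 : 0 < y := Real.exp_pos _
  have hzre : (z : ℂ).re = a := by rw [hz]; simp
  have hzim : (z : ℂ).im = y := by rw [hz]; simp
  have hzim' : z.im = y := by rw [← UpperHalfPlane.coe_im, hzim]
  have hlog : Real.log (2 * a / y) = t + Real.log a + Real.log 2 := by
    rw [Real.log_div (by positivity) (by positivity),
      Real.log_mul two_ne_zero (ne_of_gt ha), hy, Real.log_exp]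
    ring
  -- key formula for exp of the distance
  have key : ∀ w : ℍ, Real.exp (dist z w) =
      (dist (z : ℂ) (w : ℂ) + dist (z : ℂ) ((starRingEnd ℂ) (w : ℂ))) ^ 2
        / (2 * Real.sqrt (z.im * w.im)) ^ 2 := by
    intro w
    have h := UpperHalfPlane.exp_half_dist z w
    have : Real.exp (dist z w) = Real.exp (dist z w / 2) ^ 2 := by
      rw [sq, ← Real.exp_add]; ring_nf
    rw [this, h, div_pow]
  constructor
  · -- lower bound
    rw [← hlog]
    refine le_of_not_gt fun hlt => ?_
    obtain ⟨w, hw, hdlt⟩ := (Metric.infDist_lt_iff ⟨UpperHalfPlane.I, UpperHalfPlane.I_re⟩).mp hlt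
    have hs0 : 0 < w.im := w.2
    set s := w.im with hs
    have hwre : (w : ℂ).re = 0 := by
      rw [UpperHalfPlane.coe_re]; exact hw
    have hwim : (w : ℂ).im = s := UpperHalfPlane.coe_im w
    -- compute the two distances
    have hp : dist (z : ℂ) (w : ℂ) = Real.sqrt (a ^ 2 + (y - s) ^ 2) := by
      rw [Complex.dist_eq_re_im, hzre, hzim, hwre, hwim, sub_zero]
    have hq : dist (z : ℂ) ((starRingEnd ℂ) (w : ℂ)) = Real.sqrt (a ^ 2 + (y + s) ^ 2) := by
      rw [Complex.dist_eq_re_im, hzre, hzim]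
      simp only [Complex.conj_re, Complex.conj_im, hwre, hwim, sub_zero, sub_neg_eq_add]
    set p := Real.sqrt (a ^ 2 + (y - s) ^ 2) with hpdef
    set q := Real.sqrt (a ^ 2 + (y + s) ^ 2) with hqdef
    have hp2 : p ^ 2 = a ^ 2 + (y - s) ^ 2 := Real.sq_sqrt (by positivity)
    have hq2 : q ^ 2 = a ^ 2 + (y + s) ^ 2 := Real.sq_sqrt (by positivity)
    have hpq : 2 * a * s ≤ p * q := by
      rw [hpdef, hqdef, ← Real.sqrt_mul (by positivity)]
      rw [show (2 : ℝ) * a * s = Real.sqrt ((2 * a * s) ^ 2) from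
        (Real.sqrt_sq (by positivity)).symm]
      apply Real.sqrt_le_sqrt
      nlinarith [sq_nonneg (a ^ 2 + y ^ 2 - s ^ 2), sq_nonneg (y * s)]
    -- exp of dist bound
    have hexp : 2 * a / y ≤ Real.exp (dist z w) := by
      rw [key w, hp, hq, hzim', ← hs, mul_pow,
        Real.sq_sqrt (by positivity : (0:ℝ) ≤ y * s)]
      rw [div_le_div_iff₀ hy0 (by positivity)]
      nlinarith [sq_nonneg (a - s), sq_nonneg y, hs0.le, hy0.le]
    have : Real.log (2 * a / y) ≤ dist z w := by
      rw [← Real.log_exp (dist z w)]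
      exact Real.log_le_log (by positivity) hexp
    exact absurd hdlt (not_lt.mpr this)
  · -- upper bound
    set r := Real.sqrt (a ^ 2 + y ^ 2) with hrdef
    have hr0 : 0 < r := Real.sqrt_pos.mpr (by positivity)
    have hr2 : r ^ 2 = a ^ 2 + y ^ 2 := Real.sq_sqrt (by positivity)
    obtain ⟨w, hwre, hwim, hwre', hwim'⟩ :
        ∃ w : ℍ, (w : ℂ).re = 0 ∧ (w : ℂ).im = r ∧ w.re = 0 ∧ w.im = r :=
      ⟨⟨⟨0, r⟩, hr0⟩, rfl, rfl, rfl, rfl⟩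
    have hwmem : w ∈ {w : ℍ | w.re = 0} := hwre'
    have hle := Metric.infDist_le_dist_of_mem hwmem (x := z)
    have hp : dist (z : ℂ) (w : ℂ) = Real.sqrt (a ^ 2 + (y - r) ^ 2) := by
      rw [Complex.dist_eq_re_im, hzre, hzim, hwre, hwim, sub_zero]
    have hq : dist (z : ℂ) ((starRingEnd ℂ) (w : ℂ)) = Real.sqrt (a ^ 2 + (y + r) ^ 2) := by
      rw [Complex.dist_eq_re_im, hzre, hzim]
      simp only [Complex.conj_re, Complex.conj_im, hwre, hwim, sub_zero, sub_neg_eq_add]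
    set p := Real.sqrt (a ^ 2 + (y - r) ^ 2) with hpdef
    set q := Real.sqrt (a ^ 2 + (y + r) ^ 2) with hqdef
    have hp2 : p ^ 2 = a ^ 2 + (y - r) ^ 2 := Real.sq_sqrt (by positivity)
    have hq2 : q ^ 2 = a ^ 2 + (y + r) ^ 2 := Real.sq_sqrt (by positivity)
    have hpq : p * q = 2 * r * a := by
      rw [hpdef, hqdef, ← Real.sqrt_mul (by positivity)]
      rw [show (a ^ 2 + (y - r) ^ 2) * (a ^ 2 + (y + r) ^ 2) = (2 * r * a) ^ 2 by linear_combination (r ^ 2 - a ^ 2 - y ^ 2) * hr2]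
      exact Real.sqrt_sq (by positivity)
    -- exact value of exp dist
    have hexp : Real.exp (dist z w) = (r + a) / y := by
      rw [key w, hp, hq, hzim', hwim', mul_pow,
        Real.sq_sqrt (by positivity : (0:ℝ) ≤ y * r)]
      rw [div_eq_div_iff (by positivity) (by positivity)]
      linear_combination y * hp2 + y * hq2 + 2 * y * hpq - 2 * y * hr2
    have hrle : r ≤ a + y ^ 2 / (2 * a) := by
      have hsq : a ^ 2 + y ^ 2 ≤ (a + y ^ 2 / (2 * a)) ^ 2 := by
        have h4 : (a + y ^ 2 / (2 * a)) ^ 2 = a ^ 2 + y ^ 2 + (y ^ 2 / (2 * a)) ^ 2 := by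
          field_simp
          ring
        nlinarith [sq_nonneg (y ^ 2 / (2 * a))]
      calc r ≤ Real.sqrt ((a + y ^ 2 / (2 * a)) ^ 2) := Real.sqrt_le_sqrt hsq
        _ = a + y ^ 2 / (2 * a) := Real.sqrt_sq (by positivity)
    have hv : Real.exp (dist z w) ≤ 2 * a / y * Real.exp (y ^ 2 / a ^ 2) := by
      rw [hexp]
      have h1 : (1 : ℝ) + y ^ 2 / a ^ 2 ≤ Real.exp (y ^ 2 / a ^ 2) := by
        have := Real.add_one_le_exp (y ^ 2 / a ^ 2); linarith
      have h2 : (r + a) / y ≤ 2 * a / y * (1 + y ^ 2 / a ^ 2) := by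
        rw [div_mul_eq_mul_div, div_le_div_iff₀ hy0 hy0]
        have : r + a ≤ 2 * a + y ^ 2 / (2 * a) := by linarith
        have h3 : 2 * a + y ^ 2 / (2 * a) ≤ 2 * a * (1 + y ^ 2 / a ^ 2) := by
          have e1 : 2 * a * (1 + y ^ 2 / a ^ 2) = 2 * a + 2 * y ^ 2 / a := by
            field_simp
          have e2 : y ^ 2 / (2 * a) ≤ 2 * y ^ 2 / a := by
            rw [div_le_div_iff₀ (by positivity) (by positivity)]
            nlinarith [sq_nonneg y]
          linarith
        nlinarith [hy0.le]
      calc (r + a) / y ≤ 2 * a / y * (1 + y ^ 2 / a ^ 2) := h2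
        _ ≤ 2 * a / y * Real.exp (y ^ 2 / a ^ 2) := by
            apply mul_le_mul_of_nonneg_left h1 (by positivity)
    have hdist : dist z w ≤ t + Real.log a + Real.log 2 + y ^ 2 / a ^ 2 := by
      rw [← hlog, ← Real.log_exp (dist z w)]
      calc Real.log (Real.exp (dist z w))
          ≤ Real.log (2 * a / y * Real.exp (y ^ 2 / a ^ 2)) :=
            Real.log_le_log (Real.exp_pos _) hv
        _ = Real.log (2 * a / y) + y ^ 2 / a ^ 2 := by
            rw [Real.log_mul (by positivity) (Real.exp_ne_zero _), Real.log_exp]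
    have hy2 : Real.exp (-(2 * t)) = y ^ 2 := by
      rw [hy, show (-(2 * t)) = -t + -t by ring, Real.exp_add, sq]
    rw [hy2]
    exact hle.trans hdist
end

section
/- (Lemma 18.) Let A = [[a, b], [c, d]] ∈ SL₂(ℤ) have all four entries positive. Then the infimum of the hyperbolic distances dist(p, q) over p in the imaginary-axis geodesic I and q in the image A • I of I under the Möbius action of A equals arcosh(1 + 2bc). (This is the length of the common perpendicular between the geodesics I and A • I.) -/
open scoped UpperHalfPlane MatrixGroups

lemma exp_ge_aux {c d : ℝ} (hc : 1 ≤ c) (hd : 0 ≤ d) (h : c ≤ Real.cosh d) :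
    c + Real.sqrt (c ^ 2 - 1) ≤ Real.exp d := by
  set y := Real.exp d with hy
  have hy1 : 1 ≤ y := Real.one_le_exp hd
  have hy0 : 0 < y := lt_of_lt_of_le one_pos hy1
  have hinv : Real.exp (-d) = y⁻¹ := by rw [Real.exp_neg]
  rw [Real.cosh_eq, hinv] at h
  have hiy : y⁻¹ ≤ 1 := by
    rw [inv_le_one_iff₀]; right; exact hy1
  have hyc : c ≤ y := by
    have : 2 * c ≤ y + y⁻¹ := by linarith
    nlinarith
  have hsq : c ^ 2 - 1 ≤ (y - c) ^ 2 := by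
    have h2 : 2 * c * y ≤ y ^ 2 + 1 := by
      have : 2 * c ≤ y + y⁻¹ := by linarith
      have := mul_le_mul_of_nonneg_right this hy0.le
      have hyy : y⁻¹ * y = 1 := inv_mul_cancel₀ hy0.ne'
      nlinarith
    nlinarith
  have := Real.sqrt_le_sqrt hsq
  rw [Real.sqrt_sq (by linarith)] at this
  linarith

lemma arcosh_le_of_le_cosh {c d : ℝ} (hc : 1 ≤ c) (hd : 0 ≤ d) (h : c ≤ Real.cosh d) :
    arcosh c ≤ d := by
  have h1 := exp_ge_aux hc hd h
  have h0 : 0 < c + Real.sqrt (c ^ 2 - 1) := by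
    have := Real.sqrt_nonneg (c ^ 2 - 1); linarith
  calc arcosh c = Real.log (c + Real.sqrt (c ^ 2 - 1)) := rfl
    _ ≤ Real.log (Real.exp d) := Real.log_le_log h0 h1
    _ = d := Real.log_exp d

lemma eq_arcosh_of_cosh_eq {c d : ℝ} (hc : 1 ≤ c) (hd : 0 ≤ d) (h : Real.cosh d = c) :
    d = arcosh c := by
  have h1 := exp_ge_aux hc hd h.ge
  -- reverse inequality
  set y := Real.exp d with hy
  have hy1 : 1 ≤ y := Real.one_le_exp hd
  have hy0 : 0 < y := lt_of_lt_of_le one_pos hy1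
  have hinv : Real.exp (-d) = y⁻¹ := by rw [Real.exp_neg]
  rw [Real.cosh_eq, hinv] at h
  have hyy : y⁻¹ * y = 1 := inv_mul_cancel₀ hy0.ne'
  have h2 : y ^ 2 - 2 * c * y + 1 = 0 := by
    have := congrArg (· * (2 * y)) h
    nlinarith
  have hsq : (y - c) ^ 2 = c ^ 2 - 1 := by nlinarith
  have hyc : c ≤ y := by nlinarith [Real.sqrt_nonneg (c ^ 2 - 1), Real.sq_sqrt (by nlinarith : (0:ℝ) ≤ c ^ 2 - 1)]
  have : Real.sqrt (c ^ 2 - 1) = y - c := by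
    rw [← hsq, Real.sqrt_sq (by linarith)]
  have hey : y = c + Real.sqrt (c ^ 2 - 1) := by rw [this]; ring
  have : d = Real.log y := (Real.log_exp d).symm
  rw [this, hey]; rfl


lemma key (A : SL(2, ℤ)) (h00 : 0 < A 0 0) (h01 : 0 < A 0 1) (h10 : 0 < A 1 0) (h11 : 0 < A 1 1)
    (p z : ℍ) (hp : p.re = 0) (hz : z.re = 0) :
    Real.cosh (dist p (A • z)) =
      (1 + 2 * ((A 0 1 : ℝ) * (A 1 0 : ℝ))) +
        (((A 0 0 : ℝ) * z.im - (A 1 1 : ℝ) * p.im) ^ 2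
          + ((A 0 1 : ℝ) - (A 1 0 : ℝ) * p.im * z.im) ^ 2) / (2 * p.im * z.im) := by
  set a : ℝ := (A 0 0 : ℝ) with ha
  set b : ℝ := (A 0 1 : ℝ) with hb
  set c : ℝ := (A 1 0 : ℝ) with hc
  set d : ℝ := (A 1 1 : ℝ) with hd
  have hdet : a * d - b * c = 1 := by
    have h2 := A.2
    rw [Matrix.det_fin_two] at h2
    rw [ha, hb, hc, hd]
    exact_mod_cast congrArg (Int.cast : ℤ → ℝ) h2
  have ha0 : (0:ℝ) < a := by rw [ha]; exact_mod_cast h00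
  have hb0 : (0:ℝ) < b := by rw [hb]; exact_mod_cast h01
  have hc0 : (0:ℝ) < c := by rw [hc]; exact_mod_cast h10
  have hd0 : (0:ℝ) < d := by rw [hd]; exact_mod_cast h11
  set t : ℝ := p.im with htdef
  set w : ℝ := z.im with hwdef
  have ht : 0 < t := p.im_pos
  have hw : 0 < w := z.im_pos
  have hz' : (z : ℂ) = (w : ℂ) * Complex.I := by
    apply Complex.ext <;> simp [hz, hwdef]
  set D : ℝ := c ^ 2 * w ^ 2 + d ^ 2 with hDdef
  have hD : 0 < D := by nlinarith [mul_pos hd0 hd0, sq_nonneg (c * w)]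
  have hre : (A • z).re = (b * d + a * c * w ^ 2) / D := by
    rw [UpperHalfPlane.specialLinearGroup_apply, UpperHalfPlane.mk_re]
    rw [Complex.div_re]
    simp only [algebraMap_int_eq, eq_intCast, hz', Complex.normSq_apply]
    simp [Complex.add_re, Complex.add_im, Complex.mul_re, Complex.mul_im, ← ha, ← hb, ← hc, ← hd]
    rw [← add_div, div_eq_div_iff (by nlinarith [sq_nonneg (c*w)]) hD.ne']
    ring
  have him : (A • z).im = w / D := by
    rw [UpperHalfPlane.specialLinearGroup_apply, UpperHalfPlane.mk_im]
    rw [Complex.div_im]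
    simp only [algebraMap_int_eq, eq_intCast, hz', Complex.normSq_apply]
    simp [Complex.add_re, Complex.add_im, Complex.mul_re, Complex.mul_im, ← ha, ← hb, ← hc, ← hd]
    rw [div_sub_div_same, div_eq_div_iff (by nlinarith [sq_nonneg (c*w)]) hD.ne']
    linear_combination (w * D) * hdet
  rw [UpperHalfPlane.cosh_dist, Complex.dist_eq, Complex.sq_norm, Complex.normSq_apply]
  simp only [Complex.sub_re, Complex.sub_im, UpperHalfPlane.coe_re, UpperHalfPlane.coe_im,
    hp, hre, him, ← htdef, ← hwdef]
  have hNum : (b*d + a*c*w^2)^2 + (t*D - w)^2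
      = 4*b*c*t*w*D + ((a*w - d*t)^2 + (b - c*t*w)^2)*D := by
    linear_combination (2*t*w*D - w^2*(1 + (a*d - b*c))) * hdet
  calc 1 + ((0 - (b * d + a * c * w ^ 2) / D) * (0 - (b * d + a * c * w ^ 2) / D)
          + (t - w / D) * (t - w / D)) / (2 * t * (w / D))
      = 1 + ((b*d + a*c*w^2)^2 + (t*D - w)^2)/(2*t*w*D) := by
        have h1 : ((0 - (b * d + a * c * w ^ 2) / D) * (0 - (b * d + a * c * w ^ 2) / D)
            + (t - w / D) * (t - w / D)) / (2 * t * (w / D))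
            = ((b*d + a*c*w^2)^2 + (t*D - w)^2)/(2*t*w*D) := by
          rw [div_eq_div_iff (by positivity) (by positivity)]
          field_simp
          ring
        rw [h1]
    _ = 1 + (4*b*c*t*w*D + ((a*w - d*t)^2 + (b - c*t*w)^2)*D)/(2*t*w*D) := by rw [hNum]
    _ = 1 + 2*(b*c) + ((a*w - d*t)^2 + (b - c*t*w)^2)/(2*t*w) := by
        have h2 : ∀ M : ℝ, 1 + (4*b*c*t*w*D + M*D)/(2*t*w*D) = 1 + 2*(b*c) + M/(2*t*w) := by
          intro M; field_simp; ring
        exact h2 _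

/-- Lemma 18: if `A = [[a, b], [c, d]] ∈ SL₂(ℤ)` has all entries positive, then the
distance between the imaginary-axis geodesic `I` and its image `A • I` under the
Möbius action of `A` equals `arcosh (1 + 2 b c)`. -/
theorem dist_imaginary_axis_to_translate (A : SL(2, ℤ))
    (h00 : 0 < A 0 0) (h01 : 0 < A 0 1) (h10 : 0 < A 1 0) (h11 : 0 < A 1 1) :
    sInf (Set.image2 dist {z : ℍ | z.re = 0}
        ((fun z : ℍ => A • z) '' {z : ℍ | z.re = 0})) =
      arcosh ((1 + 2 * (A 0 1 * A 1 0) : ℤ) : ℝ) := by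
  have hcast : ((1 + 2 * (A 0 1 * A 1 0) : ℤ) : ℝ)
      = 1 + 2 * ((A 0 1 : ℝ) * (A 1 0 : ℝ)) := by push_cast; ring
  rw [hcast]
  set a : ℝ := (A 0 0 : ℝ) with ha
  set b : ℝ := (A 0 1 : ℝ) with hb
  set c : ℝ := (A 1 0 : ℝ) with hc
  set d : ℝ := (A 1 1 : ℝ) with hd
  have ha0 : (0:ℝ) < a := by rw [ha]; exact_mod_cast h00
  have hb0 : (0:ℝ) < b := by rw [hb]; exact_mod_cast h01
  have hc0 : (0:ℝ) < c := by rw [hc]; exact_mod_cast h10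
  have hd0 : (0:ℝ) < d := by rw [hd]; exact_mod_cast h11
  set c0 : ℝ := 1 + 2 * (b * c) with hc0def
  have hc1 : 1 ≤ c0 := by nlinarith
  -- lower bound
  have lb : ∀ r ∈ Set.image2 dist {z : ℍ | z.re = 0}
      ((fun z : ℍ => A • z) '' {z : ℍ | z.re = 0}), arcosh c0 ≤ r := by
    rintro r ⟨p, hp, q, ⟨z, hz, rfl⟩, rfl⟩
    apply arcosh_le_of_le_cosh hc1 dist_nonneg
    rw [key A h00 h01 h10 h11 p z hp hz]
    have hterm : 0 ≤ ((a * z.im - d * p.im) ^ 2 + (b - c * p.im * z.im) ^ 2)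
        / (2 * p.im * z.im) :=
      div_nonneg (by positivity) (by nlinarith [p.im_pos, z.im_pos])
    rw [← ha, ← hb, ← hc, ← hd]
    linarith [hterm]
  -- the minimizing pair
  set s : ℝ := Real.sqrt (a * b * c * d) with hsdef
  have hs2 : s ^ 2 = a * b * c * d := Real.sq_sqrt (by positivity)
  have hs0 : 0 < s := Real.sqrt_pos.mpr (by positivity)
  set t0 : ℝ := s / (c * d) with ht0def
  set w0 : ℝ := s / (a * c) with hw0def
  have ht0 : 0 < t0 := by positivity
  have hw0 : 0 < w0 := by positivity
  set p0 : ℍ := UpperHalfPlane.mk ((t0 : ℂ) * Complex.I) (by simpa using ht0) with hp0def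
  set z0 : ℍ := UpperHalfPlane.mk ((w0 : ℂ) * Complex.I) (by simpa using hw0) with hz0def
  have hp0re : p0.re = 0 := by simp [hp0def, UpperHalfPlane.mk_re]
  have hz0re : z0.re = 0 := by simp [hz0def, UpperHalfPlane.mk_re]
  have hp0im : p0.im = t0 := by simp [hp0def, UpperHalfPlane.mk_im]
  have hz0im : z0.im = w0 := by simp [hz0def, UpperHalfPlane.mk_im]
  have hdist : dist p0 (A • z0) = arcosh c0 := by
    apply eq_arcosh_of_cosh_eq hc1 dist_nonneg
    rw [key A h00 h01 h10 h11 p0 z0 hp0re hz0re, hp0im, hz0im, ← ha, ← hb, ← hc, ← hd]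
    have h1 : a * w0 - d * t0 = 0 := by
      rw [hw0def, ht0def]
      field_simp
      ring
    have h2 : b - c * t0 * w0 = 0 := by
      rw [hw0def, ht0def]
      field_simp
      linear_combination - hs2
    rw [h1, h2]
    simp [hc0def]
  have mem : arcosh c0 ∈ Set.image2 dist {z : ℍ | z.re = 0}
      ((fun z : ℍ => A • z) '' {z : ℍ | z.re = 0}) :=
    ⟨p0, hp0re, A • z0, ⟨z0, hz0re, rfl⟩, hdist⟩
  exact le_antisymm (csInf_le ⟨arcosh c0, lb⟩ mem) (le_csInf ⟨_, mem⟩ lb)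
end

section
/- (Lemma 11(1), geometric part.) Let A = [[a, b], [c, d]] ∈ SL₂(ℤ) with abcd ≠ 0. Then the image A • I of the imaginary-axis geodesic I under the Möbius action of A is disjoint from I inside ℍ. -/
open scoped UpperHalfPlane MatrixGroups

/-- Lemma 11(1), geometric part: if `A = [[a, b], [c, d]] ∈ SL₂(ℤ)` satisfies
`abcd ≠ 0`, then the image `A • I` of the imaginary-axis geodesic `I` under the
Möbius action of `A` is disjoint from `I` inside the upper half-plane. -/
theorem translate_of_imaginary_axis_disjoint (A : SL(2, ℤ))
    (h : A 0 0 * A 0 1 * A 1 0 * A 1 1 ≠ 0) :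
    Disjoint ((fun z : ℍ => A • z) '' {z : ℍ | z.re = 0}) {z : ℍ | z.re = 0} := by
  rw [Set.disjoint_left]
  rintro w ⟨z, hz, rfl⟩ hw
  simp only [Set.mem_setOf_eq] at hz hw
  set a := A 0 0 with ha
  set b := A 0 1 with hb
  set c := A 1 0 with hc
  set d := A 1 1 with hd
  have hdet : a * d - b * c = 1 := by
    have := A.2
    rwa [Matrix.det_fin_two] at this
  -- integer sign fact
  have hpos : 0 < (a * c) * (b * d) := by
    have hne : (a * c) * (b * d) ≠ 0 := by
      intro h0; apply h
      rw [show a * b * c * d = a * c * (b * d) from by ring, h0]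
    have hnn : 0 ≤ (a * c) * (b * d) := by
      have heq : (a * c) * (b * d) = (b * c) * (b * c + 1) := by
        have : a * d = b * c + 1 := by linarith
        linear_combination b * c * this
      rw [heq]
      rcases le_or_gt 0 (b * c) with hb' | hb'
      · positivity
      · have h1 : b * c + 1 ≤ 0 := by omega
        nlinarith
    exact lt_of_le_of_ne hnn (Ne.symm hne)
  -- compute real part
  have hcoe : ((A • z : ℍ) : ℂ) = ((a : ℂ) * z + b) / ((c : ℂ) * z + d) := by
    rw [UpperHalfPlane.specialLinearGroup_apply]
    simp [ha, hb, hc, hd]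
  have hc0 : c ≠ 0 := by
    intro h0; apply h; rw [show a * b * c * d = a * b * d * c from by ring, h0, mul_zero]
  have hden : ((c : ℂ) * z + d) ≠ 0 := by
    intro h0
    have him := congrArg Complex.im h0
    simp at him
    rcases him with him | him
    · exact hc0 (by exact_mod_cast him)
    · exact z.im_pos.ne' him
  have t := z.im
  have ht : 0 < z.im := z.im_pos
  have hre : (A • z).re = ((b : ℝ) * d + (a : ℝ) * c * (z.im * z.im)) /
      Complex.normSq ((c : ℂ) * z + d) := by
    have h0 : (z : ℂ).re = 0 := hz
    rw [show (A • z).re = ((A • z : ℍ) : ℂ).re from rfl, hcoe, Complex.div_re]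
    simp only [Complex.add_re, Complex.mul_re, Complex.add_im, Complex.mul_im,
      Complex.intCast_re, Complex.intCast_im, h0, UpperHalfPlane.coe_im]
    ring
  rw [hre] at hw
  have hN : Complex.normSq ((c : ℂ) * z + d) ≠ 0 := (Complex.normSq_pos.mpr hden).ne'
  have hnum : (b : ℝ) * d + (a : ℝ) * c * (z.im * z.im) = 0 := by
    field_simp at hw; linear_combination hw
  have hcast : (0 : ℝ) < ((a : ℝ) * c) * ((b : ℝ) * d) := by
    exact_mod_cast hpos
  have key : ((a : ℝ) * c) * ((b : ℝ) * d) = -((a : ℝ) * c * z.im) ^ 2 := by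
    linear_combination ((a : ℝ) * c) * hnum
  nlinarith [sq_nonneg ((a : ℝ) * c * z.im)]
end

section
/- (Lemma 11(2), geometric part.) Let A = [[a, b], [c, d]] ∈ SL₂(ℤ) with abcd ≠ 0. Then the image A • I of the imaginary-axis geodesic I under the Möbius action of A is contained in the open right half-plane {z ∈ ℍ : Re z > 0} if and only if ac > 0 and bd > 0. -/
open scoped UpperHalfPlane MatrixGroups

lemma re_smul_formula (A : SL(2, ℤ)) (z : ℍ) (hz : z.re = 0) :
    (A • z).re = ((A 0 1 : ℝ) * (A 1 1) + (A 0 0) * (A 1 0) * z.im ^ 2) /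
      ((A 1 1 : ℝ) ^ 2 + (A 1 0) ^ 2 * z.im ^ 2) := by
  rw [UpperHalfPlane.specialLinearGroup_apply]
  have hre : (z : ℂ).re = 0 := hz
  simp [UpperHalfPlane.coe_re, Complex.div_re, Complex.normSq_apply, hre, hz]
  ring_nf

/-- Lemma 11(2), geometric part: if `A = [[a, b], [c, d]] ∈ SL₂(ℤ)` satisfies
`abcd ≠ 0`, then `A • I` is contained in the open right half-plane if and only if
`ac > 0` and `bd > 0`. -/
theorem translate_of_imaginary_axis_in_right_halfplane_iff (A : SL(2, ℤ))
    (h : A 0 0 * A 0 1 * A 1 0 * A 1 1 ≠ 0) :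
    ((fun z : ℍ => A • z) '' {z : ℍ | z.re = 0} ⊆ {z : ℍ | 0 < z.re}) ↔
      (0 < A 0 0 * A 1 0 ∧ 0 < A 0 1 * A 1 1) := by
  have ha : A 0 0 ≠ 0 := fun h0 => h (by simp [h0])
  have hb : A 0 1 ≠ 0 := fun h0 => h (by simp [h0])
  have hc : A 1 0 ≠ 0 := fun h0 => h (by simp [h0])
  have hd : A 1 1 ≠ 0 := fun h0 => h (by simp [h0])
  have hQ : A 0 0 * A 1 0 ≠ 0 := mul_ne_zero ha hc
  have hP : A 0 1 * A 1 1 ≠ 0 := mul_ne_zero hb hd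
  set P : ℤ := A 0 1 * A 1 1 with hPdef
  set Q : ℤ := A 0 0 * A 1 0 with hQdef
  have hden : ∀ t : ℝ, 0 < t → 0 < (A 1 1 : ℝ) ^ 2 + (A 1 0) ^ 2 * t ^ 2 := by
    intro t ht
    have hd2 : (A 1 1 : ℝ) ≠ 0 := Int.cast_ne_zero.mpr hd
    positivity
  constructor
  · intro hsub
    have key : ∀ t : ℝ, 0 < t → 0 < (P : ℝ) + (Q : ℝ) * t ^ 2 := by
      intro t ht
      set z : ℍ := ⟨⟨0, t⟩, ht⟩ with hzdef
      have hz : z.re = 0 := rfl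
      have himz : z.im = t := rfl
      have hmem := hsub ⟨z, hz, rfl⟩
      rw [Set.mem_setOf_eq, re_smul_formula A z hz, himz] at hmem
      have h2 := (div_pos_iff.mp hmem)
      rcases h2 with ⟨h3, _⟩ | ⟨_, h4⟩
      · push_cast [hPdef, hQdef]; linarith
      · exact absurd (hden t ht) (not_lt.mpr h4.le)
    have hQ1 : (1:ℝ) ≤ |(Q : ℝ)| := by
      rw [← Int.cast_abs]; exact_mod_cast Int.one_le_abs hQ
    constructor
    · -- Q > 0
      by_contra hneg
      have hQle : Q ≤ -1 := by omega
      have hQle' : (Q : ℝ) ≤ -1 := by exact_mod_cast hQle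
      have ht : (0:ℝ) < Real.sqrt (|(P:ℝ)| + 1) := Real.sqrt_pos.mpr (by positivity)
      have hsq : Real.sqrt (|(P:ℝ)| + 1) ^ 2 = |(P:ℝ)| + 1 :=
        Real.sq_sqrt (by positivity)
      have := key _ ht
      rw [hsq] at this
      have habs : (P:ℝ) ≤ |(P:ℝ)| := le_abs_self _
      nlinarith [abs_nonneg (P:ℝ)]
    · -- P > 0
      by_contra hneg
      have hPle : P ≤ -1 := by omega
      have hPle' : (P : ℝ) ≤ -1 := by exact_mod_cast hPle
      have hQ2 : (0:ℝ) < (Q:ℝ)^2 := by positivity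
      have ht : (0:ℝ) < Real.sqrt (1 / (2 * (Q:ℝ)^2)) := Real.sqrt_pos.mpr (by positivity)
      have hsq : Real.sqrt (1 / (2 * (Q:ℝ)^2)) ^ 2 = 1 / (2 * (Q:ℝ)^2) :=
        Real.sq_sqrt (by positivity)
      have hk := key _ ht
      rw [hsq] at hk
      have : (Q:ℝ) * (1 / (2 * (Q:ℝ)^2)) ≤ 1/2 := by
        rw [mul_one_div, div_le_div_iff₀ (by positivity) (by norm_num)]
        nlinarith [le_abs_self (Q:ℝ), sq_abs (Q:ℝ), mul_le_mul_of_nonneg_left hQ1 (abs_nonneg (Q:ℝ))]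
      linarith
  · rintro ⟨hQpos, hPpos⟩ w ⟨z, hz, rfl⟩
    rw [Set.mem_setOf_eq, re_smul_formula A z hz]
    apply div_pos _ (hden z.im z.im_pos)
    have h1 : (0:ℝ) < (P:ℝ) := by exact_mod_cast hPpos
    have h2 : (0:ℝ) < (Q:ℝ) := by exact_mod_cast hQpos
    push_cast [hPdef, hQdef] at h1 h2
    nlinarith [sq_nonneg z.im, z.im_pos]
end

section
/- (Lemma 11(2), algebraic part.) Let A = [[a, b], [c, d]] ∈ SL₂(ℤ) satisfy ac > 0 and bd > 0, and let S = [[0, 1], [−1, 0]] ∈ SL₂(ℤ). Then exactly one of the four matrices A, −A, A·S, −A·S has all four entries positive. -/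
open scoped MatrixGroups

instance : Fact (Even (Fintype.card (Fin 2))) := ⟨⟨1, rfl⟩⟩

/-- The matrix `S = [[0, 1], [-1, 0]]` as an element of `SL₂(ℤ)`. -/
def S : SL(2, ℤ) := ⟨!![0, 1; -1, 0], by norm_num [Matrix.det_fin_two_of]⟩

/-- A matrix in `SL₂(ℤ)` has all four entries positive. -/
def AllPos (B : SL(2, ℤ)) : Prop :=
  0 < B 0 0 ∧ 0 < B 0 1 ∧ 0 < B 1 0 ∧ 0 < B 1 1

lemma entry_AS (A : SL(2, ℤ)) (i : Fin 2) :
    (A * S) i 0 = -(A i 1) ∧ (A * S) i 1 = A i 0 := by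
  constructor <;> rw [Matrix.SpecialLinearGroup.coe_mul] <;> simp [Matrix.mul_apply, Fin.sum_univ_two, S]

/-- Lemma 11(2), algebraic part: if `A = [[a, b], [c, d]] ∈ SL₂(ℤ)` satisfies
`ac > 0` and `bd > 0`, then exactly one of `A`, `-A`, `A·S`, `-A·S` has all four
entries positive. -/
theorem exists_unique_positive_representative (A : SL(2, ℤ))
    (h1 : 0 < A 0 0 * A 1 0) (h2 : 0 < A 0 1 * A 1 1) :
    ∃! B : SL(2, ℤ), (B = A ∨ B = -A ∨ B = A * S ∨ B = -(A * S)) ∧ AllPos B := by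
  have e00 := (entry_AS A 0).1
  have e01 := (entry_AS A 0).2
  have e10 := (entry_AS A 1).1
  have e11 := (entry_AS A 1).2
  have n00 : (-A) 0 0 = -(A 0 0) := by simp
  have n01 : (-A) 0 1 = -(A 0 1) := by simp
  have n10 : (-A) 1 0 = -(A 1 0) := by simp
  have n11 : (-A) 1 1 = -(A 1 1) := by simp
  have m00 : (-(A * S)) 0 0 = -((A * S) 0 0) := by simp
  have m01 : (-(A * S)) 0 1 = -((A * S) 0 1) := by simp
  have m10 : (-(A * S)) 1 0 = -((A * S) 1 0) := by simp
  have m11 : (-(A * S)) 1 1 = -((A * S) 1 1) := by simp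
  rcases mul_pos_iff.mp h1 with ⟨ha, hc⟩ | ⟨ha, hc⟩ <;>
    rcases mul_pos_iff.mp h2 with ⟨hb, hd⟩ | ⟨hb, hd⟩
  · refine ⟨A, ⟨Or.inl rfl, ha, hb, hc, hd⟩, ?_⟩
    rintro B ⟨(h | h | h | h), p1, p2, p3, p4⟩ <;> subst h <;>
      first
        | rfl
        | (exfalso; omega)
  · refine ⟨A * S, ⟨Or.inr (Or.inr (Or.inl rfl)), ?_⟩, ?_⟩
    · exact ⟨by omega, by rw [e01]; omega, by omega, by rw [e11]; omega⟩
    rintro B ⟨(h | h | h | h), p1, p2, p3, p4⟩ <;> subst h <;>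
      first
        | rfl
        | (exfalso; omega)
  · refine ⟨-(A * S), ⟨Or.inr (Or.inr (Or.inr rfl)), ?_⟩, ?_⟩
    · exact ⟨by rw [m00, e00]; omega, by rw [m01, e01]; omega,
        by rw [m10, e10]; omega, by rw [m11, e11]; omega⟩
    rintro B ⟨(h | h | h | h), p1, p2, p3, p4⟩ <;> subst h <;>
      first
        | rfl
        | (exfalso; omega)
  · refine ⟨-A, ⟨Or.inr (Or.inl rfl), ?_⟩, ?_⟩
    · exact ⟨by rw [n00]; omega, by rw [n01]; omega, by rw [n10]; omega, by rw [n11]; omega⟩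
    rintro B ⟨(h | h | h | h), p1, p2, p3, p4⟩ <;> subst h <;>
      first
        | rfl
        | (exfalso; omega)
end

section
/- (Lemma 12(iii), second claim.) The image γ in PSL₂(ℤ) of the matrix [[2, 1], [3, 2]] ∈ SL₂(ℤ) is hyperbolic (|tr| > 2), ambiguous of the first kind, and conjugate in PSL₂(ℤ) to an element that is ambiguous of the second kind. In particular there exist hyperbolic elements of PSL₂(ℤ) that are both conjugate to an element ambiguous of the first kind and conjugate to an element ambiguous of the second kind. -/
open Matrix
open scoped MatrixGroups

/-- The determinant `-1` integer matrix `W = [[1, 0], [0, -1]]`. -/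
noncomputable def Wmat : Matrix (Fin 2) (Fin 2) ℤ := !![1, 0; 0, -1]

/-- The determinant `-1` integer matrix `W₁ = [[1, 0], [1, -1]]`. -/
noncomputable def W1mat : Matrix (Fin 2) (Fin 2) ℤ := !![1, 0; 1, -1]

/-- A lift `A ∈ SL₂(ℤ)` is ambiguous of the first kind if `W·A·W⁻¹ = ±A⁻¹`. -/
def Amb1 (A : SL(2, ℤ)) : Prop :=
  Wmat * (A : Matrix (Fin 2) (Fin 2) ℤ) * Wmat⁻¹ = ((A⁻¹ : SL(2, ℤ)) : Matrix (Fin 2) (Fin 2) ℤ) ∨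
  Wmat * (A : Matrix (Fin 2) (Fin 2) ℤ) * Wmat⁻¹ = -((A⁻¹ : SL(2, ℤ)) : Matrix (Fin 2) (Fin 2) ℤ)

/-- A lift `A ∈ SL₂(ℤ)` is ambiguous of the second kind if `W₁·A·W₁⁻¹ = ±A⁻¹`. -/
def Amb2 (A : SL(2, ℤ)) : Prop :=
  W1mat * (A : Matrix (Fin 2) (Fin 2) ℤ) * W1mat⁻¹ = ((A⁻¹ : SL(2, ℤ)) : Matrix (Fin 2) (Fin 2) ℤ) ∨
  W1mat * (A : Matrix (Fin 2) (Fin 2) ℤ) * W1mat⁻¹ = -((A⁻¹ : SL(2, ℤ)) : Matrix (Fin 2) (Fin 2) ℤ)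

/-- The subgroup `{±1}` of `SL₂(ℤ)`. -/
def pmOne : Subgroup SL(2, ℤ) := Subgroup.zpowers (-1)

instance : pmOne.Normal := by
  constructor
  intro x hx g
  obtain ⟨n, rfl⟩ := Subgroup.mem_zpowers_iff.mp hx
  have hc : Commute g (-1 : SL(2, ℤ)) := by
    show g * (-1) = (-1) * g
    apply Subtype.ext
    show ((g * (-1) : SL(2, ℤ)) : Matrix (Fin 2) (Fin 2) ℤ)
        = (((-1) * g : SL(2, ℤ)) : Matrix (Fin 2) (Fin 2) ℤ)
    simp
  have hcn : Commute g ((-1 : SL(2, ℤ)) ^ n) := hc.zpow_right n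
  have : g * (-1 : SL(2, ℤ)) ^ n * g⁻¹ = (-1) ^ n := by
    rw [hcn.eq, mul_assoc, mul_inv_cancel, mul_one]
  rw [this]
  exact Subgroup.zpow_mem _ (Subgroup.mem_zpowers _) n

/-- `PSL₂(ℤ) = SL₂(ℤ)/{±1}`. -/
abbrev PSL2Z := SL(2, ℤ) ⧸ pmOne

/-- An element of `PSL₂(ℤ)` is hyperbolic if the absolute value of the trace of a lift
to `SL₂(ℤ)` is greater than `2`. -/
def IsHyp (γ : PSL2Z) : Prop :=
  ∃ A : SL(2, ℤ), (QuotientGroup.mk A : PSL2Z) = γ ∧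
    2 < |Matrix.trace (A : Matrix (Fin 2) (Fin 2) ℤ)|

/-- An element of `PSL₂(ℤ)` is primitive if it is not a proper power. -/
def IsPrim (γ : PSL2Z) : Prop := ¬ ∃ (δ : PSL2Z) (n : ℕ), 2 ≤ n ∧ δ ^ n = γ

/-- An element of `PSL₂(ℤ)` is ambiguous of the first kind if it has a lift which is. -/
def AmbFst (γ : PSL2Z) : Prop :=
  ∃ A : SL(2, ℤ), (QuotientGroup.mk A : PSL2Z) = γ ∧ Amb1 A

/-- An element of `PSL₂(ℤ)` is ambiguous of the second kind if it has a lift which is. -/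
def AmbSnd (γ : PSL2Z) : Prop :=
  ∃ A : SL(2, ℤ), (QuotientGroup.mk A : PSL2Z) = γ ∧ Amb2 A

/-- The translation length `ℓ(γ) = 2 arcosh(|tr γ|/2)` of `γ ∈ PSL₂(ℤ)` is at most `s`. -/
def TransLenLE (γ : PSL2Z) (s : ℝ) : Prop :=
  ∃ A : SL(2, ℤ), (QuotientGroup.mk A : PSL2Z) = γ ∧
    2 * arcosh (((|Matrix.trace (A : Matrix (Fin 2) (Fin 2) ℤ)| : ℤ) : ℝ) / 2) ≤ s

/-- The matrix `[[2, 1], [3, 2]]` as an element of `SL₂(ℤ)`. -/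
def Aex : SL(2, ℤ) := ⟨!![2, 1; 3, 2], by norm_num [Matrix.det_fin_two_of]⟩


lemma ring_inv_neg_one : Ring.inverse (-1 : ℤ) = -1 := by
  rw [show (-1 : ℤ) = ((-1 : ℤˣ) : ℤ) by rfl, Ring.inverse_unit]; rfl

def Cex : SL(2, ℤ) := ⟨!![-3, -1; -2, -1], by norm_num [Matrix.det_fin_two_of]⟩

def Bex : SL(2, ℤ) := ⟨!![-1, 6; -1, 5], by norm_num [Matrix.det_fin_two_of]⟩

lemma Wmat_inv : Wmat⁻¹ = !![1, 0; 0, -1] := by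
  rw [Matrix.inv_def]
  simp [Wmat, Matrix.adjugate_fin_two, Matrix.det_fin_two_of]
  simp [ring_inv_neg_one]

lemma W1mat_inv : W1mat⁻¹ = !![1, 0; 1, -1] := by
  rw [Matrix.inv_def]
  simp [W1mat, Matrix.adjugate_fin_two, Matrix.det_fin_two_of]
  simp [ring_inv_neg_one]

/-- Lemma 12(iii), second claim: the image of `[[2, 1], [3, 2]]` in `PSL₂(ℤ)` is
hyperbolic, ambiguous of the first kind, and conjugate to an element ambiguous of the
second kind. In particular there exist hyperbolic elements of `PSL₂(ℤ)` that are both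
conjugate to an element ambiguous of the first kind and conjugate to an element
ambiguous of the second kind. -/
theorem example_both_kinds :
    (IsHyp (QuotientGroup.mk Aex : PSL2Z) ∧
      AmbFst (QuotientGroup.mk Aex : PSL2Z) ∧
      ∃ δ : PSL2Z, IsConj (QuotientGroup.mk Aex : PSL2Z) δ ∧ AmbSnd δ) ∧
    ∃ γ : PSL2Z, IsHyp γ ∧ (∃ δ : PSL2Z, IsConj γ δ ∧ AmbFst δ) ∧
      (∃ δ : PSL2Z, IsConj γ δ ∧ AmbSnd δ) := by
  have hyp : IsHyp (QuotientGroup.mk Aex : PSL2Z) := by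
    refine ⟨Aex, rfl, ?_⟩
    simp [Aex, Matrix.trace_fin_two_of]
  have amb1 : AmbFst (QuotientGroup.mk Aex : PSL2Z) := by
    refine ⟨Aex, rfl, Or.inl ?_⟩
    rw [Wmat_inv, Matrix.SpecialLinearGroup.coe_inv]
    show Wmat * (!![2,1;3,2]) * _ = _
    rw [Wmat]
    ext i j
    fin_cases i <;> fin_cases j <;>
      simp [Aex, Matrix.adjugate_fin_two, Matrix.mul_apply, Fin.sum_univ_two]
  have key : (Cex * Aex : SL(2, ℤ)) = Bex * Cex := by
    apply Subtype.ext
    show ((Cex * Aex : SL(2, ℤ)) : Matrix (Fin 2) (Fin 2) ℤ) = ((Bex * Cex : SL(2, ℤ)) : Matrix (Fin 2) (Fin 2) ℤ)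
    simp only [Matrix.SpecialLinearGroup.coe_mul, Cex, Aex, Bex]
    ext i j
    fin_cases i <;> fin_cases j <;> decide
  have conj : IsConj (QuotientGroup.mk Aex : PSL2Z) (QuotientGroup.mk Bex : PSL2Z) := by
    refine ⟨⟨(QuotientGroup.mk Cex : PSL2Z), (QuotientGroup.mk Cex⁻¹ : PSL2Z), ?_, ?_⟩, ?_⟩
    · rw [← QuotientGroup.mk_mul, mul_inv_cancel]; rfl
    · rw [← QuotientGroup.mk_mul, inv_mul_cancel]; rfl
    · show (QuotientGroup.mk Cex : PSL2Z) * QuotientGroup.mk Aex = QuotientGroup.mk Bex * QuotientGroup.mk Cex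
      rw [← QuotientGroup.mk_mul, ← QuotientGroup.mk_mul, key]
  have amb2 : AmbSnd (QuotientGroup.mk Bex : PSL2Z) := by
    refine ⟨Bex, rfl, Or.inl ?_⟩
    rw [W1mat_inv, Matrix.SpecialLinearGroup.coe_inv]
    show W1mat * (!![-1,6;-1,5]) * _ = _
    rw [W1mat]
    ext i j
    fin_cases i <;> fin_cases j <;>
      simp [Bex, Matrix.adjugate_fin_two, Matrix.mul_apply, Fin.sum_univ_two]
  exact ⟨⟨hyp, amb1, _, conj, amb2⟩, _, hyp, ⟨_, IsConj.refl _, amb1⟩, ⟨_, conj, amb2⟩⟩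
end

section
/- (Lemma 12(iv), first claim.) Let γ ∈ PSL₂(ℤ) be a primitive hyperbolic element whose conjugacy class in PSL₂(ℤ) contains an element ambiguous of the first kind but contains no element ambiguous of the second kind. Then exactly 4 elements of the conjugacy class of γ are ambiguous of the first kind. -/
open Matrix
open scoped MatrixGroups

-- Part 1: basics
section Part1

open scoped MatrixGroups

local notation "SLZ" => SL(2, ℤ)
local notation "G" => PSL2Z

namespace FourAmb

lemma Wmat_mul_Wmat : Wmat * Wmat = 1 := by
  show (!![1,0;0,-1] : Matrix (Fin 2) (Fin 2) ℤ) * !![1,0;0,-1] = 1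
  rw [Matrix.mul_fin_two, Matrix.one_fin_two]
  norm_num

lemma Wmat_inv : Wmat⁻¹ = Wmat := Matrix.inv_eq_right_inv Wmat_mul_Wmat

lemma W1mat_mul_W1mat : W1mat * W1mat = 1 := by
  show (!![1,0;1,-1] : Matrix (Fin 2) (Fin 2) ℤ) * !![1,0;1,-1] = 1
  rw [Matrix.mul_fin_two, Matrix.one_fin_two]
  norm_num

lemma W1mat_inv : W1mat⁻¹ = W1mat := Matrix.inv_eq_right_inv W1mat_mul_W1mat

lemma SL_neg_mul (A B : SLZ) : (-A) * B = -(A*B) := by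
  apply Subtype.ext
  simp [Matrix.SpecialLinearGroup.coe_mul, Matrix.SpecialLinearGroup.coe_neg]

lemma SL_mul_neg (A B : SLZ) : A * (-B) = -(A*B) := by
  apply Subtype.ext
  simp [Matrix.SpecialLinearGroup.coe_mul, Matrix.SpecialLinearGroup.coe_neg]

lemma SL_neg_neg (A : SLZ) : -(-A) = A := by
  apply Subtype.ext
  simp [Matrix.SpecialLinearGroup.coe_neg]

lemma SL_inv_neg (B : SLZ) : (-B)⁻¹ = -(B⁻¹) := by
  apply inv_eq_of_mul_eq_one_right
  rw [SL_neg_mul, SL_mul_neg, SL_neg_neg, mul_inv_cancel]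

lemma SL_neg_one_sq : (-1 : SLZ) * (-1) = 1 := by
  rw [SL_neg_mul, SL_mul_neg]
  rw [SL_neg_neg, one_mul]

lemma mem_pmOne (x : SLZ) : x ∈ pmOne ↔ x = 1 ∨ x = -1 := by
  constructor
  · rintro hx
    obtain ⟨n, rfl⟩ := Subgroup.mem_zpowers_iff.mp hx
    rcases Int.even_or_odd n with ⟨m, hm⟩ | ⟨m, hm⟩
    · left
      calc (-1 : SLZ) ^ (n : ℤ) = ((-1 : SLZ) * (-1)) ^ m := by
            rw [hm, (Commute.refl (-1 : SLZ)).mul_zpow]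
            exact zpow_add _ m m
        _ = 1 := by rw [SL_neg_one_sq]; exact one_zpow m
    · right
      calc (-1 : SLZ) ^ (n : ℤ) = ((-1 : SLZ) * (-1)) ^ m * (-1) := by
            rw [hm, (Commute.refl (-1 : SLZ)).mul_zpow]
            rw [show (2 * m + 1 : ℤ) = m + m + 1 by ring]
            rw [zpow_add (-1 : SLZ) (m+m) 1, zpow_add (-1 : SLZ) m m, zpow_one]
        _ = -1 := by rw [SL_neg_one_sq, (one_zpow m : (1:SLZ)^m = 1), one_mul]
  · rintro (rfl | rfl)
    · exact one_mem _
    · exact Subgroup.mem_zpowers _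

lemma mk_eq_mk {A B : SLZ} :
    (QuotientGroup.mk A : G) = QuotientGroup.mk B ↔ A = B ∨ A = -B := by
  rw [QuotientGroup.eq, mem_pmOne]
  constructor
  · rintro (h | h)
    · left
      have := congrArg (A * ·) h
      simpa [← mul_assoc] using this.symm
    · right
      have := congrArg (A * ·) h
      simp only [← mul_assoc, mul_inv_cancel, one_mul, SL_mul_neg, mul_one] at this
      rw [this, SL_neg_neg]
  · rintro (rfl | rfl)
    · left; simp
    · right
      rw [SL_inv_neg, SL_neg_mul, inv_mul_cancel]

lemma mk_neg (A : SLZ) : (QuotientGroup.mk (-A) : G) = QuotientGroup.mk A := by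
  rw [mk_eq_mk]
  right
  rfl

end FourAmb
end Part1
-- Part 2: sigma, Amb characterizations, fixed points
section Part2
open scoped MatrixGroups
local notation "SLZ" => SL(2, ℤ)
local notation "G" => PSL2Z
namespace FourAmb

lemma Wmat_def : Wmat = !![1,0;0,-1] := rfl
lemma W1mat_def : W1mat = !![1,0;1,-1] := rfl

lemma wconj_entries (a b c d : ℤ) : Wmat * !![a,b;c,d] * Wmat = !![a,-b;-c,d] := by
  rw [Wmat_def, Matrix.mul_fin_two, Matrix.mul_fin_two]
  norm_num

def Ssl : SLZ := ⟨!![0,1;-1,0], by rw [Matrix.det_fin_two_of]; ring⟩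

lemma inv_coe (A : SLZ) :
    ((A⁻¹ : SLZ) : Matrix (Fin 2) (Fin 2) ℤ) = !![A.1 1 1, -A.1 0 1; -A.1 1 0, A.1 0 0] := by
  rw [Matrix.SpecialLinearGroup.coe_inv, Matrix.adjugate_fin_two]

lemma det_entries (A : SLZ) : A.1 0 0 * A.1 1 1 - A.1 0 1 * A.1 1 0 = 1 := by
  have h := A.2
  rwa [Matrix.det_fin_two] at h

noncomputable def wConj : SLZ →* SLZ where
  toFun A := ⟨Wmat * A.1 * Wmat, by
    rw [Matrix.det_mul, Matrix.det_mul, A.2, Wmat_def, Matrix.det_fin_two_of]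
    ring⟩
  map_one' := by
    apply Subtype.ext
    show Wmat * (1:Matrix (Fin 2) (Fin 2) ℤ) * Wmat = 1
    rw [mul_one, Wmat_mul_Wmat]
  map_mul' A B := by
    apply Subtype.ext
    show Wmat * (A.1 * B.1) * Wmat = (Wmat * A.1 * Wmat) * (Wmat * B.1 * Wmat)
    have : (Wmat * A.1 * Wmat) * (Wmat * B.1 * Wmat)
        = Wmat * A.1 * (Wmat * Wmat) * B.1 * Wmat := by simp only [mul_assoc]
    rw [this, Wmat_mul_Wmat, mul_one, mul_assoc Wmat A.1 B.1]

lemma wConj_coe (A : SLZ) : ((wConj A : SLZ) : Matrix (Fin 2) (Fin 2) ℤ) = Wmat * A.1 * Wmat := rfl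

lemma wConj_neg (A : SLZ) : wConj (-A) = -(wConj A) := by
  apply Subtype.ext
  rw [wConj_coe, Matrix.SpecialLinearGroup.coe_neg, Matrix.SpecialLinearGroup.coe_neg,
    wConj_coe, mul_neg, neg_mul]

noncomputable def sigma : G →* G :=
  QuotientGroup.map pmOne pmOne wConj (by
    intro x hx
    rw [mem_pmOne] at hx
    rcases hx with rfl | rfl
    · rw [Subgroup.mem_comap, _root_.map_one]
      exact one_mem _
    · rw [Subgroup.mem_comap, wConj_neg, _root_.map_one, mem_pmOne]
      right; rfl)

lemma sigma_mk (A : SLZ) :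
    sigma (QuotientGroup.mk A) = QuotientGroup.mk (wConj A) := rfl

-- Amb1 minus case is impossible
lemma amb1_plus {A : SLZ} (h : Amb1 A) :
    Wmat * (A : Matrix (Fin 2) (Fin 2) ℤ) * Wmat
      = ((A⁻¹ : SLZ) : Matrix (Fin 2) (Fin 2) ℤ) := by
  rcases h with h | h
  · rwa [Wmat_inv] at h
  · exfalso
    rw [Wmat_inv] at h
    have hA : (A : Matrix (Fin 2) (Fin 2) ℤ) = !![A.1 0 0, A.1 0 1; A.1 1 0, A.1 1 1] :=
      Matrix.eta_fin_two _
    rw [inv_coe] at h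
    rw [hA, wconj_entries] at h
    have h00 := (Matrix.ext_iff.mpr h) 0 0
    have h01 := (Matrix.ext_iff.mpr h) 0 1
    have h10 := (Matrix.ext_iff.mpr h) 1 0
    simp at h00 h01 h10
    have hdet := det_entries A
    have hb : A.1 0 1 = 0 := by omega
    have hc : A.1 1 0 = 0 := by omega
    rw [hb, hc] at hdet
    simp at hdet
    rw [h00] at hdet
    nlinarith [mul_self_nonneg (A.1 1 1)]

lemma ambFst_iff (x : G) : AmbFst x ↔ sigma x = x⁻¹ := by
  constructor
  · rintro ⟨A, rfl, hA⟩
    have h := amb1_plus hA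
    rw [sigma_mk]
    have : wConj A = A⁻¹ := by
      apply Subtype.ext
      rw [wConj_coe, h]
    rw [this]
    rfl
  · intro h
    obtain ⟨A, rfl⟩ := QuotientGroup.mk_surjective x
    rw [sigma_mk] at h
    have h2 : (QuotientGroup.mk (wConj A) : G) = QuotientGroup.mk (A⁻¹) := h
    rw [mk_eq_mk] at h2
    refine ⟨A, rfl, ?_⟩
    rcases h2 with h2 | h2
    · left
      rw [Wmat_inv, ← wConj_coe, h2]
    · right
      rw [Wmat_inv, ← wConj_coe, h2, Matrix.SpecialLinearGroup.coe_neg]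

lemma sbar_sq : (QuotientGroup.mk Ssl : G) * (QuotientGroup.mk Ssl) = 1 := by
  show (QuotientGroup.mk (Ssl * Ssl) : G) = QuotientGroup.mk 1
  rw [mk_eq_mk]
  right
  apply Subtype.ext
  show (Ssl.1 * Ssl.1 : Matrix (Fin 2) (Fin 2) ℤ) = -(1:Matrix (Fin 2) (Fin 2) ℤ)
  show (!![0,1;-1,0] : Matrix (Fin 2) (Fin 2) ℤ) * !![0,1;-1,0] = _
  rw [Matrix.mul_fin_two, Matrix.one_fin_two]
  norm_num

lemma sbar_ne_one : (QuotientGroup.mk Ssl : G) ≠ 1 := by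
  intro h
  rw [show (1 : G) = QuotientGroup.mk 1 from rfl, mk_eq_mk] at h
  rcases h with h | h
  · have := (Matrix.ext_iff.mpr (congrArg Subtype.val h)) 0 1
    simp [Ssl] at this
  · have := (Matrix.ext_iff.mpr (congrArg Subtype.val h)) 0 1
    simp [Ssl] at this

lemma sigma_sbar : sigma (QuotientGroup.mk Ssl) = QuotientGroup.mk Ssl := by
  rw [sigma_mk, mk_eq_mk]
  right
  apply Subtype.ext
  rw [wConj_coe, Matrix.SpecialLinearGroup.coe_neg]
  show Wmat * !![0,1;-1,0] * Wmat = -(!![0,1;-1,0] : Matrix (Fin 2) (Fin 2) ℤ)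
  rw [wconj_entries]
  norm_num

lemma fix_sigma {x : G} (h : sigma x = x) :
    x = 1 ∨ x = QuotientGroup.mk Ssl := by
  obtain ⟨M, rfl⟩ := QuotientGroup.mk_surjective x
  rw [sigma_mk, mk_eq_mk] at h
  have hM : (M : Matrix (Fin 2) (Fin 2) ℤ) = !![M.1 0 0, M.1 0 1; M.1 1 0, M.1 1 1] :=
    Matrix.eta_fin_two _
  have hdet := det_entries M
  rcases h with h | h
  · left
    have h' : Wmat * M.1 * Wmat = M.1 := congrArg Subtype.val h
    rw [hM, wconj_entries] at h'
    have h01 := (Matrix.ext_iff.mpr h') 0 1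
    have h10 := (Matrix.ext_iff.mpr h') 1 0
    simp at h01 h10
    -- b = 0, c = 0, so a*d = 1
    have hb : M.1 0 1 = 0 := by omega
    have hc : M.1 1 0 = 0 := by omega
    rw [hb, hc] at hdet
    simp at hdet
    rcases Int.mul_eq_one_iff_eq_one_or_neg_one.mp (by linarith : M.1 0 0 * M.1 1 1 = 1) with
      ⟨ha, hd⟩ | ⟨ha, hd⟩
    · have : M = 1 := by
        apply Subtype.ext
        rw [Matrix.SpecialLinearGroup.coe_one, hM, ha, hd, hb, hc]
        exact Matrix.one_fin_two.symm
      rw [this]; rfl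
    · have : M = -1 := by
        apply Subtype.ext
        rw [Matrix.SpecialLinearGroup.coe_neg, Matrix.SpecialLinearGroup.coe_one,
          hM, ha, hd, hb, hc, Matrix.one_fin_two]
        norm_num
      rw [this]
      show _ = QuotientGroup.mk (1 : SLZ)
      rw [mk_eq_mk]
      right; rfl
  · right
    have h' : Wmat * M.1 * Wmat = -M.1 := by
      have := congrArg Subtype.val h
      rwa [wConj_coe, Matrix.SpecialLinearGroup.coe_neg] at this
    rw [hM, wconj_entries] at h'
    have h00 := (Matrix.ext_iff.mpr h') 0 0
    have h11 := (Matrix.ext_iff.mpr h') 1 1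
    simp at h00 h11
    have ha : M.1 0 0 = 0 := by omega
    have hd : M.1 1 1 = 0 := by omega
    rw [ha, hd] at hdet
    simp at hdet
    -- b * c = -1
    have : (M.1 0 1 = 1 ∧ M.1 1 0 = -1) ∨ (M.1 0 1 = -1 ∧ M.1 1 0 = 1) := by
      rcases Int.eq_one_or_neg_one_of_mul_eq_neg_one' (by linarith : M.1 0 1 * M.1 1 0 = -1) with
        ⟨h1, h2⟩ | ⟨h1, h2⟩
      · exact Or.inl ⟨h1, h2⟩
      · exact Or.inr ⟨h1, h2⟩
    rw [mk_eq_mk]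
    rcases this with ⟨hb, hc⟩ | ⟨hb, hc⟩
    · left
      apply Subtype.ext
      rw [hM, ha, hb, hc, hd]
      rfl
    · right
      apply Subtype.ext
      rw [hM, ha, hb, hc, hd]
      show _ = -Ssl.1
      show _ = -(!![0,1;-1,0] : Matrix (Fin 2) (Fin 2) ℤ)
      norm_num

end FourAmb
end Part2
-- Part 3: classification of integer involutions of determinant -1
section Part3
open scoped MatrixGroups
local notation "SLZ" => SL(2, ℤ)
local notation "G" => PSL2Z
namespace FourAmb

def M3 (a b c : ℤ) : Matrix (Fin 2) (Fin 2) ℤ := !![a, b; c, -a]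

def Good (N : Matrix (Fin 2) (Fin 2) ℤ) : Prop :=
  ∃ P : SLZ, P.1 * N * (P⁻¹).1 = Wmat ∨ P.1 * N * (P⁻¹).1 = -Wmat ∨
    P.1 * N * (P⁻¹).1 = W1mat ∨ P.1 * N * (P⁻¹).1 = -W1mat

lemma good_conj {N : Matrix (Fin 2) (Fin 2) ℤ} (Q : SLZ)
    (h : Good (Q.1 * N * (Q⁻¹).1)) : Good N := by
  obtain ⟨P, hP⟩ := h
  refine ⟨P * Q, ?_⟩
  have he : ((P * Q : SLZ) : Matrix (Fin 2) (Fin 2) ℤ) = P.1 * Q.1 := rfl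
  have he2 : (((P * Q)⁻¹ : SLZ) : Matrix (Fin 2) (Fin 2) ℤ) = (Q⁻¹).1 * (P⁻¹).1 := by
    rw [_root_.mul_inv_rev]; rfl
  rw [he, he2]
  have : P.1 * Q.1 * N * ((Q⁻¹).1 * (P⁻¹).1) = P.1 * (Q.1 * N * (Q⁻¹).1) * (P⁻¹).1 := by
    simp only [mul_assoc]
  rw [this]
  exact hP

lemma good_neg {N : Matrix (Fin 2) (Fin 2) ℤ} (h : Good (-N)) : Good N := by
  obtain ⟨P, hP⟩ := h
  refine ⟨P, ?_⟩
  have : P.1 * (-N) * (P⁻¹).1 = -(P.1 * N * (P⁻¹).1) := by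
    rw [mul_neg, neg_mul]
  rw [this] at hP
  rcases hP with h | h | h | h
  · right; left; exact neg_eq_iff_eq_neg.mp h
  · left
    have := neg_eq_iff_eq_neg.mp h
    rw [this, neg_neg]
  · right; right; right; exact neg_eq_iff_eq_neg.mp h
  · right; right; left
    have := neg_eq_iff_eq_neg.mp h
    rw [this, neg_neg]

def Tm (m : ℤ) : SLZ := ⟨!![1, m; 0, 1], by rw [Matrix.det_fin_two_of]; ring⟩
def Lm (m : ℤ) : SLZ := ⟨!![1, 0; m, 1], by rw [Matrix.det_fin_two_of]; ring⟩

lemma Tm_inv (m : ℤ) : (Tm m)⁻¹ = Tm (-m) := by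
  apply inv_eq_of_mul_eq_one_right
  apply Subtype.ext
  show (!![1, m; 0, 1] : Matrix (Fin 2) (Fin 2) ℤ) * !![1, -m; 0, 1] = 1
  ext i j
  fin_cases i <;> fin_cases j <;>
    simp [Matrix.mul_apply, Fin.sum_univ_two, Matrix.one_apply]

lemma Lm_inv (m : ℤ) : (Lm m)⁻¹ = Lm (-m) := by
  apply inv_eq_of_mul_eq_one_right
  apply Subtype.ext
  show (!![1, 0; m, 1] : Matrix (Fin 2) (Fin 2) ℤ) * !![1, 0; -m, 1] = 1
  ext i j
  fin_cases i <;> fin_cases j <;>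
    simp [Matrix.mul_apply, Fin.sum_univ_two, Matrix.one_apply]

def Ssl' : SLZ := ⟨!![0, -1; 1, 0], by rw [Matrix.det_fin_two_of]; ring⟩

lemma Ssl_inv : Ssl⁻¹ = Ssl' := by
  apply inv_eq_of_mul_eq_one_right
  apply Subtype.ext
  show (!![0, 1; -1, 0] : Matrix (Fin 2) (Fin 2) ℤ) * !![0, -1; 1, 0] = 1
  ext i j
  fin_cases i <;> fin_cases j <;>
    simp [Matrix.mul_apply, Fin.sum_univ_two, Matrix.one_apply]

lemma conjT (m a b c : ℤ) :
    (Tm m).1 * M3 a b c * ((Tm m)⁻¹).1 = M3 (a + m*c) (b - 2*m*a - m*m*c) c := by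
  rw [Tm_inv]
  show (!![1, m; 0, 1] : Matrix (Fin 2) (Fin 2) ℤ) * !![a, b; c, -a] * !![1, -m; 0, 1] = _
  ext i j
  fin_cases i <;> fin_cases j <;>
    simp [Matrix.mul_apply, Fin.sum_univ_two, M3] <;> ring

lemma conjL (m a b c : ℤ) :
    (Lm m).1 * M3 a b c * ((Lm m)⁻¹).1 = M3 (a - m*b) b (c + 2*m*a - m*m*b) := by
  rw [Lm_inv]
  show (!![1, 0; m, 1] : Matrix (Fin 2) (Fin 2) ℤ) * !![a, b; c, -a] * !![1, 0; -m, 1] = _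
  ext i j
  fin_cases i <;> fin_cases j <;>
    simp [Matrix.mul_apply, Fin.sum_univ_two, M3] <;> ring

lemma conjS (a b c : ℤ) :
    Ssl.1 * M3 a b c * (Ssl⁻¹).1 = M3 (-a) (-c) (-b) := by
  rw [Ssl_inv]
  show (!![0, 1; -1, 0] : Matrix (Fin 2) (Fin 2) ℤ) * !![a, b; c, -a] * !![0, -1; 1, 0] = _
  ext i j
  fin_cases i <;> fin_cases j <;>
    simp [Matrix.mul_apply, Fin.sum_univ_two, M3, Ssl, Ssl'] <;> ring

lemma exists_bal (a c : ℤ) (hc : c ≠ 0) : ∃ m : ℤ, 2 * (a + m * c).natAbs ≤ c.natAbs := by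
  have habs : (0:ℤ) < (c.natAbs : ℤ) := by
    have := Int.natAbs_pos.mpr hc
    exact_mod_cast this
  have hne : (c.natAbs : ℤ) ≠ 0 := ne_of_gt habs
  obtain ⟨u, hu⟩ : ∃ u : ℤ, u * c = (c.natAbs : ℤ) := by
    rcases le_or_gt 0 c with h | h
    · exact ⟨1, by rw [one_mul, Int.natAbs_of_nonneg h]⟩
    · refine ⟨-1, ?_⟩
      rw [neg_one_mul, ← Int.abs_eq_natAbs, abs_of_neg h]
  set q := a / (c.natAbs : ℤ) with hq
  set r := a % (c.natAbs : ℤ) with hrdef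
  have hr : (c.natAbs : ℤ) * q + r = a := Int.mul_ediv_add_emod a (c.natAbs : ℤ)
  have hr0 : 0 ≤ r := Int.emod_nonneg a hne
  have hr1 : r < (c.natAbs : ℤ) := Int.emod_lt_of_pos a habs
  by_cases h2 : 2 * r ≤ (c.natAbs : ℤ)
  · refine ⟨-q * u, ?_⟩
    have hx : a + (-q * u) * c = r := by
      have h5 : (-q * u) * c = -((c.natAbs : ℤ) * q) := by
        rw [mul_assoc, hu]; ring
      rw [h5]
      omega
    rw [hx]
    omega
  · refine ⟨(-q - 1) * u, ?_⟩
    have hx : a + ((-q - 1) * u) * c = r - (c.natAbs : ℤ) := by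
      have h5 : ((-q - 1) * u) * c = -((c.natAbs : ℤ) * q) - (c.natAbs : ℤ) := by
        rw [mul_assoc, hu]; ring
      rw [h5]
      omega
    rw [hx]
    omega

lemma good_of_entries (a b c a' b' c' : ℤ) (h1 : a = a') (h2 : b = b') (h3 : c = c')
    (h : Good (M3 a' b' c')) : Good (M3 a b c) := by
  rw [h1, h2, h3]; exact h

lemma good_W100 : Good (M3 1 0 0) := by
  refine ⟨1, ?_⟩
  left
  simp only [Matrix.SpecialLinearGroup.coe_one, one_mul, inv_one, mul_one]
  show (!![1, 0; 0, -1] : Matrix (Fin 2) (Fin 2) ℤ) = Wmat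
  rfl

lemma good_X110 : Good (M3 1 1 0) := by
  refine ⟨Ssl', ?_⟩
  right; right; right
  have hinv : (Ssl'⁻¹ : SLZ) = Ssl := by rw [← Ssl_inv, inv_inv]
  rw [hinv]
  show (!![0, -1; 1, 0] : Matrix (Fin 2) (Fin 2) ℤ) * !![1, 1; 0, -(1)] * !![0, 1; -1, 0]
      = -W1mat
  show _ = -(!![1, 0; 1, -1] : Matrix (Fin 2) (Fin 2) ℤ)
  ext i j
  fin_cases i <;> fin_cases j <;>
    simp [Matrix.mul_apply, Fin.sum_univ_two]

lemma good_a1_b (b : ℤ) : Good (M3 1 b 0) := by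
  rcases Int.even_or_odd b with ⟨k, hk⟩ | ⟨k, hk⟩
  · apply good_conj (Tm k)
    rw [conjT]
    exact good_of_entries _ _ _ 1 0 0 (by ring) (by ring_nf; omega) rfl good_W100
  · apply good_conj (Tm k)
    rw [conjT]
    exact good_of_entries _ _ _ 1 1 0 (by ring) (by ring_nf; omega) rfl good_X110

lemma good_b0 (a b : ℤ) (ha : a = 1 ∨ a = -1) : Good (M3 a b 0) := by
  rcases ha with rfl | rfl
  · exact good_a1_b b
  · apply good_neg
    have : -(M3 (-1) b 0) = M3 1 (-b) 0 := by
      show -(!![(-1), b; 0, -(-1)] : Matrix (Fin 2) (Fin 2) ℤ) = !![1, -b; 0, -1]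
      norm_num
    rw [this]
    exact good_a1_b (-b)

lemma good_J : Good (M3 0 1 1) := by
  apply good_conj (Lm (-1))
  rw [conjL]
  exact good_of_entries _ _ _ 1 1 0 (by ring) rfl (by ring) (good_a1_b 1)

lemma good_negJ : Good (M3 0 (-1) (-1)) := by
  apply good_neg
  have : -(M3 0 (-1) (-1)) = M3 0 1 1 := by
    show -(!![(0:ℤ), -1; -1, -0] : Matrix (Fin 2) (Fin 2) ℤ) = !![0, 1; 1, -0]
    norm_num
  rw [this]
  exact good_J

lemma classify_rec : ∀ n : ℕ, ∀ a b c : ℤ, a.natAbs ≤ n → a*a + b*c = 1 → Good (M3 a b c) := by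
  intro n
  induction n using Nat.strong_induction_on with
  | _ n IH =>
    intro a b c hn hrel
    by_cases hc0 : c = 0
    · subst hc0
      apply good_b0
      rw [← mul_self_eq_one_iff]
      linear_combination hrel
    · by_cases hb0 : b = 0
      · subst hb0
        apply good_conj Ssl
        rw [conjS]
        apply good_of_entries _ _ _ (-a) (-c) 0 rfl rfl neg_zero
        apply good_b0
        rw [← mul_self_eq_one_iff]
        linear_combination hrel
      · by_cases ha0 : a = 0
        · subst ha0
          rcases Int.mul_eq_one_iff_eq_one_or_neg_one.mp (by linarith : b * c = 1) with
            ⟨rfl, rfl⟩ | ⟨rfl, rfl⟩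
          · exact good_J
          · exact good_negJ
        · -- both b c nonzero, a nonzero: descent
          have haa : 1 ≤ a * a := by
            rcases lt_or_gt_of_ne ha0 with h | h <;> nlinarith
          have habs : (b.natAbs : ℤ) * (c.natAbs : ℤ) = (a.natAbs : ℤ) * (a.natAbs : ℤ) - 1 := by
            have e1 : ((b.natAbs : ℤ)) * (c.natAbs : ℤ) = |b| * |c| := by
              rw [Int.abs_eq_natAbs, Int.abs_eq_natAbs]
            have e2 : |b| * |c| = |b * c| := (abs_mul b c).symm
            have e3 : b * c = 1 - a * a := by linarith
            have e4 : (a.natAbs : ℤ) * (a.natAbs : ℤ) = a * a := by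
              exact_mod_cast Int.natAbs_mul_self
            rw [e1, e2, e3, abs_of_nonpos (by linarith), e4]
            ring
          have hmin : c.natAbs < a.natAbs ∨ b.natAbs < a.natAbs := by
            by_contra hcon
            push_neg at hcon
            obtain ⟨h1, h2⟩ := hcon
            have h1' : (a.natAbs : ℤ) ≤ (c.natAbs : ℤ) := by exact_mod_cast h1
            have h2' : (a.natAbs : ℤ) ≤ (b.natAbs : ℤ) := by exact_mod_cast h2
            have hk : (a.natAbs : ℤ) * (a.natAbs : ℤ) ≤ (b.natAbs : ℤ) * (c.natAbs : ℤ) := by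
              have := mul_le_mul h2' h1' (by positivity) (by positivity)
              linarith [this]
            linarith [habs, hk]
          rcases hmin with hlt | hlt
          · -- reduce a mod c using Tm
            obtain ⟨m, hm⟩ := exists_bal a c hc0
            apply good_conj (Tm m)
            rw [conjT]
            apply IH (a + m*c).natAbs ?_ _ _ _ (le_refl _) ?_
            · have hlt' : c.natAbs < a.natAbs := hlt
              omega
            · linear_combination hrel
          · -- reduce a mod b using Lm
            obtain ⟨m, hm⟩ := exists_bal a (-b) (by omega : (-b) ≠ 0)
            rw [Int.natAbs_neg] at hm
            apply good_conj (Lm m)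
            rw [conjL]
            have hmeq : a - m * b = a + m * (-b) := by ring
            apply IH (a - m*b).natAbs ?_ _ _ _ (le_refl _) ?_
            · rw [hmeq]; omega
            · linear_combination hrel

lemma inv_classify (M : Matrix (Fin 2) (Fin 2) ℤ) (hdet : M.det = -1) (hsq : M * M = 1) :
    Good M := by
  -- first, trace zero
  have hM : M = !![M 0 0, M 0 1; M 1 0, M 1 1] := Matrix.eta_fin_two M
  set a := M 0 0
  set b := M 0 1
  set c := M 1 0
  set d := M 1 1
  rw [hM, Matrix.det_fin_two_of] at hdet
  have hsq' : (!![a,b;c,d] : Matrix (Fin 2) (Fin 2) ℤ) * !![a,b;c,d] = 1 := by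
    rw [← hM]; exact hsq
  rw [Matrix.mul_fin_two, Matrix.one_fin_two] at hsq'
  have e00 := (Matrix.ext_iff.mpr hsq') 0 0
  have e01 := (Matrix.ext_iff.mpr hsq') 0 1
  have e10 := (Matrix.ext_iff.mpr hsq') 1 0
  have e11 := (Matrix.ext_iff.mpr hsq') 1 1
  simp at e00 e01 e10 e11
  -- e00 : a*a + b*c = 1, e01 : a*b + b*d = 0, etc
  have htr : d = -a := by
    by_cases h : a + d = 0
    · omega
    · have hb : b = 0 := by
        have : b * (a + d) = 0 := by ring_nf; ring_nf at e01; linarith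
        rcases mul_eq_zero.mp this with h' | h'
        · exact h'
        · exact absurd h' h
      have hc : c = 0 := by
        have : c * (a + d) = 0 := by ring_nf; ring_nf at e10; linarith
        rcases mul_eq_zero.mp this with h' | h'
        · exact h'
        · exact absurd h' h
      rw [hb, hc] at hdet e00
      simp at hdet e00
      -- a*d = -1, a*a = 1
      have : d = (a*a) * d := by rw [e00]; ring
      have h2 : (a*a)*d = a * (a*d) := by ring
      rw [h2, hdet] at this
      omega
  have hrel : a*a + b*c = 1 := e00
  rw [htr] at hM
  have hM3 : M = M3 a b c := hM
  rw [hM3]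
  exact classify_rec a.natAbs a b c (le_refl _) hrel

end FourAmb
end Part3
-- Part 4a: commutant representation theory for a hyperbolic A
section Part4
open scoped MatrixGroups
local notation "SLZ" => SL(2, ℤ)
local notation "G" => PSL2Z
namespace FourAmb

variable (A : SLZ)

/-- `B` commutes with `A`. -/
def Comm (B : SLZ) : Prop := B.1 * A.1 = A.1 * B.1

/-- `B = x•1 + y•A` entrywise over `ℚ`. -/
def Repr (B : SLZ) (x y : ℚ) : Prop :=
  (B.1 0 0 : ℚ) = x + y * (A.1 0 0 : ℚ) ∧
  (B.1 0 1 : ℚ) = y * (A.1 0 1 : ℚ) ∧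
  (B.1 1 0 : ℚ) = y * (A.1 1 0 : ℚ) ∧
  (B.1 1 1 : ℚ) = x + y * (A.1 1 1 : ℚ)

variable (ht : 2 < Matrix.trace A.1)

lemma trace_entries : Matrix.trace A.1 = A.1 0 0 + A.1 1 1 := Matrix.trace_fin_two A.1

include ht in
lemma nonscalar : ¬(A.1 0 1 = 0 ∧ A.1 1 0 = 0 ∧ A.1 0 0 = A.1 1 1) := by
  rintro ⟨hb, hc, had⟩
  have hdet := det_entries A
  rw [hb, hc, ← had] at hdet
  rw [trace_entries, ← had] at ht
  nlinarith

lemma comm_e (B : SLZ) (hB : Comm A B) :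
    (B.1 0 0) * (A.1 0 0) + (B.1 0 1) * (A.1 1 0)
      = (A.1 0 0) * (B.1 0 0) + (A.1 0 1) * (B.1 1 0) ∧
    (B.1 0 0) * (A.1 0 1) + (B.1 0 1) * (A.1 1 1)
      = (A.1 0 0) * (B.1 0 1) + (A.1 0 1) * (B.1 1 1) ∧
    (B.1 1 0) * (A.1 0 0) + (B.1 1 1) * (A.1 1 0)
      = (A.1 1 0) * (B.1 0 0) + (A.1 1 1) * (B.1 1 0) := by
  have h00 := (Matrix.ext_iff.mpr hB) 0 0
  have h01 := (Matrix.ext_iff.mpr hB) 0 1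
  have h10 := (Matrix.ext_iff.mpr hB) 1 0
  simp only [Matrix.mul_apply, Fin.sum_univ_two] at h00 h01 h10
  exact ⟨h00, h01, h10⟩

include ht in
lemma exists_repr (B : SLZ) (hB : Comm A B) : ∃ x y : ℚ, Repr A B x y := by
  obtain ⟨h00, h01, h10⟩ := comm_e A B hB
  by_cases hb : A.1 0 1 ≠ 0
  · refine ⟨(B.1 0 0 : ℚ) - (B.1 0 1 : ℚ)/(A.1 0 1 : ℚ) * (A.1 0 0 : ℚ),
      (B.1 0 1 : ℚ)/(A.1 0 1 : ℚ), ?_, ?_, ?_, ?_⟩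
    · ring
    · field_simp
    · have hbq : (A.1 0 1 : ℚ) ≠ 0 := Int.cast_ne_zero.mpr hb
      field_simp
      have h00q : (B.1 0 0 : ℚ) * (A.1 0 0 : ℚ) + (B.1 0 1 : ℚ) * (A.1 1 0 : ℚ)
          = (A.1 0 0 : ℚ) * (B.1 0 0 : ℚ) + (A.1 0 1 : ℚ) * (B.1 1 0 : ℚ) := by
        exact_mod_cast congrArg (Int.cast : ℤ → ℚ) h00
      linear_combination -h00q
    · have hbq : (A.1 0 1 : ℚ) ≠ 0 := Int.cast_ne_zero.mpr hb
      field_simp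
      have h01q : (B.1 0 0 : ℚ) * (A.1 0 1 : ℚ) + (B.1 0 1 : ℚ) * (A.1 1 1 : ℚ)
          = (A.1 0 0 : ℚ) * (B.1 0 1 : ℚ) + (A.1 0 1 : ℚ) * (B.1 1 1 : ℚ) := by
        exact_mod_cast congrArg (Int.cast : ℤ → ℚ) h01
      linear_combination -h01q
  · push_neg at hb
    by_cases hcc : A.1 1 0 ≠ 0
    · have hcq : (A.1 1 0 : ℚ) ≠ 0 := Int.cast_ne_zero.mpr hcc
      refine ⟨(B.1 0 0 : ℚ) - (B.1 1 0 : ℚ)/(A.1 1 0 : ℚ) * (A.1 0 0 : ℚ),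
        (B.1 1 0 : ℚ)/(A.1 1 0 : ℚ), ?_, ?_, ?_, ?_⟩
      · ring
      · have h00q : (B.1 0 0 : ℚ) * (A.1 0 0 : ℚ) + (B.1 0 1 : ℚ) * (A.1 1 0 : ℚ)
            = (A.1 0 0 : ℚ) * (B.1 0 0 : ℚ) + (A.1 0 1 : ℚ) * (B.1 1 0 : ℚ) := by
          exact_mod_cast congrArg (Int.cast : ℤ → ℚ) h00
        field_simp
        linear_combination h00q
      · field_simp
      · have h10q : (B.1 1 0 : ℚ) * (A.1 0 0 : ℚ) + (B.1 1 1 : ℚ) * (A.1 1 0 : ℚ)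
            = (A.1 1 0 : ℚ) * (B.1 0 0 : ℚ) + (A.1 1 1 : ℚ) * (B.1 1 0 : ℚ) := by
          exact_mod_cast congrArg (Int.cast : ℤ → ℚ) h10
        field_simp
        linear_combination h10q
    · push_neg at hcc
      have had : A.1 0 0 ≠ A.1 1 1 := by
        intro h
        exact nonscalar A ht ⟨hb, hcc, h⟩
      have hadq : (A.1 0 0 : ℚ) - (A.1 1 1 : ℚ) ≠ 0 := by
        intro h
        apply had
        have : (A.1 0 0 : ℚ) = (A.1 1 1 : ℚ) := by linarith
        exact_mod_cast this
      refine ⟨(B.1 0 0 : ℚ) - ((B.1 0 0 : ℚ) - (B.1 1 1 : ℚ))/((A.1 0 0 : ℚ) - (A.1 1 1 : ℚ))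
          * (A.1 0 0 : ℚ),
        ((B.1 0 0 : ℚ) - (B.1 1 1 : ℚ))/((A.1 0 0 : ℚ) - (A.1 1 1 : ℚ)), ?_, ?_, ?_, ?_⟩
      · ring
      · have h01q : (B.1 0 0 : ℚ) * (A.1 0 1 : ℚ) + (B.1 0 1 : ℚ) * (A.1 1 1 : ℚ)
            = (A.1 0 0 : ℚ) * (B.1 0 1 : ℚ) + (A.1 0 1 : ℚ) * (B.1 1 1 : ℚ) := by
          exact_mod_cast congrArg (Int.cast : ℤ → ℚ) h01
        have hbq : (A.1 0 1 : ℚ) = 0 := by exact_mod_cast hb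
        rw [hbq] at h01q ⊢
        -- q * d = a * q  =>  q = 0
        have : (B.1 0 1 : ℚ) * ((A.1 0 0 : ℚ) - (A.1 1 1 : ℚ)) = 0 := by
          linear_combination -h01q
        rcases mul_eq_zero.mp this with h' | h'
        · rw [h']; ring
        · exact absurd h' hadq
      · have h10q : (B.1 1 0 : ℚ) * (A.1 0 0 : ℚ) + (B.1 1 1 : ℚ) * (A.1 1 0 : ℚ)
            = (A.1 1 0 : ℚ) * (B.1 0 0 : ℚ) + (A.1 1 1 : ℚ) * (B.1 1 0 : ℚ) := by
          exact_mod_cast congrArg (Int.cast : ℤ → ℚ) h10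
        have hcq : (A.1 1 0 : ℚ) = 0 := by exact_mod_cast hcc
        rw [hcq] at h10q ⊢
        have : (B.1 1 0 : ℚ) * ((A.1 0 0 : ℚ) - (A.1 1 1 : ℚ)) = 0 := by
          linear_combination h10q
        rcases mul_eq_zero.mp this with h' | h'
        · rw [h']; ring
        · exact absurd h' hadq
      · field_simp
        ring

include ht in
lemma repr_unique (B : SLZ) (x y x' y' : ℚ) (h : Repr A B x y) (h' : Repr A B x' y') :
    x = x' ∧ y = y' := by
  obtain ⟨g1, g2, g3, g4⟩ := h
  obtain ⟨g1', g2', g3', g4'⟩ := h'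
  have hy : y = y' := by
    by_contra hyy
    have hyd : y - y' ≠ 0 := sub_ne_zero.mpr hyy
    apply nonscalar A ht
    have e2 : (y - y') * (A.1 0 1 : ℚ) = 0 := by linear_combination g2' - g2
    have e3 : (y - y') * (A.1 1 0 : ℚ) = 0 := by linear_combination g3' - g3
    have e14 : (y - y') * ((A.1 0 0 : ℚ) - (A.1 1 1 : ℚ)) = 0 := by
      linear_combination (g1' - g1) - (g4' - g4)
    refine ⟨?_, ?_, ?_⟩
    · have := (mul_eq_zero.mp e2).resolve_left hyd
      exact_mod_cast this
    · have := (mul_eq_zero.mp e3).resolve_left hyd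
      exact_mod_cast this
    · have := (mul_eq_zero.mp e14).resolve_left hyd
      have h0 : (A.1 0 0 : ℚ) = (A.1 1 1 : ℚ) := by linarith
      exact_mod_cast h0
  constructor
  · rw [hy] at g1
    linarith [g1, g1']
  · exact hy

lemma repr_one : Repr A 1 1 0 := by
  refine ⟨?_, ?_, ?_, ?_⟩ <;>
    simp [Matrix.SpecialLinearGroup.coe_one, Matrix.one_apply]

lemma repr_A : Repr A A 0 1 := by
  refine ⟨?_, ?_, ?_, ?_⟩ <;> ring

lemma repr_neg (B : SLZ) (x y : ℚ) (h : Repr A B x y) : Repr A (-B) (-x) (-y) := by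
  obtain ⟨g1, g2, g3, g4⟩ := h
  have hc : ∀ i j, ((-B : SLZ).1 i j : ℚ) = -(B.1 i j : ℚ) := by
    intro i j
    rw [Matrix.SpecialLinearGroup.coe_neg]
    push_cast
    ring_nf
    simp
  refine ⟨?_, ?_, ?_, ?_⟩ <;> rw [hc]
  · rw [g1]; ring
  · rw [g2]; ring
  · rw [g3]; ring
  · rw [g4]; ring

lemma repr_mul (B C : SLZ) (x₁ y₁ x₂ y₂ : ℚ) (h₁ : Repr A B x₁ y₁) (h₂ : Repr A C x₂ y₂) :
    Repr A (B * C) (x₁*x₂ - y₁*y₂)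
      (x₁*y₂ + y₁*x₂ + ((Matrix.trace A.1 : ℤ) : ℚ) * (y₁*y₂)) := by
  obtain ⟨g1, g2, g3, g4⟩ := h₁
  obtain ⟨k1, k2, k3, k4⟩ := h₂
  have hdet : ((A.1 0 0 : ℚ)) * (A.1 1 1 : ℚ) - (A.1 0 1 : ℚ) * (A.1 1 0 : ℚ) = 1 := by
    exact_mod_cast congrArg (Int.cast : ℤ → ℚ) (det_entries A)
  have htr : ((Matrix.trace A.1 : ℤ) : ℚ) = (A.1 0 0 : ℚ) + (A.1 1 1 : ℚ) := by
    rw [trace_entries]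
    push_cast
    ring
  have hmul : ∀ i j, ((B * C : SLZ).1 i j : ℚ)
      = (B.1 i 0 : ℚ) * (C.1 0 j : ℚ) + (B.1 i 1 : ℚ) * (C.1 1 j : ℚ) := by
    intro i j
    have : (B * C : SLZ).1 = B.1 * C.1 := rfl
    rw [this, Matrix.mul_apply, Fin.sum_univ_two]
    push_cast
    ring
  rw [Repr, hmul, hmul, hmul, hmul, htr, g1, g2, g3, g4, k1, k2, k3, k4]
  refine ⟨?_, ?_, ?_, ?_⟩
  · linear_combination (-(y₁ * y₂)) * hdet
  · ring
  · ring
  · linear_combination (-(y₁ * y₂)) * hdet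

lemma repr_norm (B : SLZ) (x y : ℚ) (h : Repr A B x y) :
    x^2 + ((Matrix.trace A.1 : ℤ) : ℚ) * x * y + y^2 = 1 := by
  obtain ⟨g1, g2, g3, g4⟩ := h
  have hdetB : ((B.1 0 0 : ℚ)) * (B.1 1 1 : ℚ) - (B.1 0 1 : ℚ) * (B.1 1 0 : ℚ) = 1 := by
    exact_mod_cast congrArg (Int.cast : ℤ → ℚ) (det_entries B)
  have hdet : ((A.1 0 0 : ℚ)) * (A.1 1 1 : ℚ) - (A.1 0 1 : ℚ) * (A.1 1 0 : ℚ) = 1 := by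
    exact_mod_cast congrArg (Int.cast : ℤ → ℚ) (det_entries A)
  have htr : ((Matrix.trace A.1 : ℤ) : ℚ) = (A.1 0 0 : ℚ) + (A.1 1 1 : ℚ) := by
    rw [trace_entries]; push_cast; ring
  rw [htr]
  rw [g1, g2, g3, g4] at hdetB
  linear_combination hdetB - (y*y) * hdet

lemma repr_trace (B : SLZ) (x y : ℚ) (h : Repr A B x y) :
    ((Matrix.trace B.1 : ℤ) : ℚ) = 2*x + ((Matrix.trace A.1 : ℤ) : ℚ) * y := by
  obtain ⟨g1, g2, g3, g4⟩ := h
  have htrB : ((Matrix.trace B.1 : ℤ) : ℚ) = (B.1 0 0 : ℚ) + (B.1 1 1 : ℚ) := by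
    rw [trace_entries]; push_cast; ring
  have htr : ((Matrix.trace A.1 : ℤ) : ℚ) = (A.1 0 0 : ℚ) + (A.1 1 1 : ℚ) := by
    rw [trace_entries]; push_cast; ring
  rw [htrB, htr, g1, g4]
  ring

lemma repr_pm_one (B : SLZ) (x : ℚ) (h : Repr A B x 0) : B = 1 ∨ B = -1 := by
  have hn := repr_norm A B x 0 h
  obtain ⟨g1, g2, g3, g4⟩ := h
  have hb : B.1 0 1 = 0 := by exact_mod_cast (by rw [g2]; ring : (B.1 0 1 : ℚ) = 0)
  have hc : B.1 1 0 = 0 := by exact_mod_cast (by rw [g3]; ring : (B.1 1 0 : ℚ) = 0)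
  rcases mul_eq_zero.mp (show (x - 1) * (x + 1) = (0:ℚ) by linear_combination hn) with hx | hx
  · left
    have hx1 : x = 1 := by linarith [sub_eq_zero.mp hx]
    have e1 : B.1 0 0 = 1 := by
      exact_mod_cast (by rw [g1, hx1]; ring : (B.1 0 0 : ℚ) = 1)
    have e4 : B.1 1 1 = 1 := by
      exact_mod_cast (by rw [g4, hx1]; ring : (B.1 1 1 : ℚ) = 1)
    apply Subtype.ext
    rw [Matrix.eta_fin_two B.1, e1, e4, hb, hc, Matrix.SpecialLinearGroup.coe_one]
    exact Matrix.one_fin_two.symm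
  · right
    have hx1 : x = -1 := by linarith [eq_neg_of_add_eq_zero_left hx]
    have e1 : B.1 0 0 = -1 := by
      exact_mod_cast (by rw [g1, hx1]; ring : (B.1 0 0 : ℚ) = -1)
    have e4 : B.1 1 1 = -1 := by
      exact_mod_cast (by rw [g4, hx1]; ring : (B.1 1 1 : ℚ) = -1)
    apply Subtype.ext
    rw [Matrix.eta_fin_two B.1, e1, e4, hb, hc, Matrix.SpecialLinearGroup.coe_neg,
      Matrix.SpecialLinearGroup.coe_one, Matrix.one_fin_two]
    norm_num

end FourAmb
end Part4
-- Part 4b: real values of the commutant, discreteness, cyclicity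
section Part4b
open scoped MatrixGroups
local notation "SLZ" => SL(2, ℤ)
local notation "G" => PSL2Z
namespace FourAmb

variable (A : SLZ)

noncomputable def tR : ℝ := ((Matrix.trace A.1 : ℤ) : ℝ)
noncomputable def sqD : ℝ := Real.sqrt (tR A ^ 2 - 4)
noncomputable def val (x y : ℚ) : ℝ := (x : ℝ) + (y : ℝ) * ((tR A + sqD A)/2)
noncomputable def val' (x y : ℚ) : ℝ := (x : ℝ) + (y : ℝ) * ((tR A - sqD A)/2)
open Classical in
noncomputable def mval (B : SLZ) : ℝ :=
  if h : ∃ p : ℚ × ℚ, Repr A B p.1 p.2 then val A h.choose.1 h.choose.2 else 0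

variable (ht : 2 < Matrix.trace A.1)

include ht in
lemma htR : 3 ≤ tR A := by
  have : (3:ℤ) ≤ Matrix.trace A.1 := ht
  rw [tR]
  exact_mod_cast this

include ht in
lemma hD5 : 5 ≤ tR A ^ 2 - 4 := by
  have := htR A ht
  nlinarith

include ht in
lemma sqD_sq : sqD A ^ 2 = tR A ^ 2 - 4 := by
  rw [sqD]
  apply Real.sq_sqrt
  linarith [hD5 A ht]

include ht in
lemma sqD_one_le : 1 ≤ sqD A := by
  have h1 := sqD_sq A ht
  have h2 := hD5 A ht
  have h3 : 0 ≤ sqD A := Real.sqrt_nonneg _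
  nlinarith

include ht in
lemma lam_two_le : 2 ≤ (tR A + sqD A)/2 := by
  have := htR A ht
  have := sqD_one_le A ht
  linarith

include ht in
lemma val_mul (x₁ y₁ x₂ y₂ : ℚ) :
    val A x₁ y₁ * val A x₂ y₂
      = val A (x₁*x₂ - y₁*y₂) (x₁*y₂ + y₁*x₂ + ((Matrix.trace A.1 : ℤ) : ℚ) * (y₁*y₂)) := by
  have hs := sqD_sq A ht
  rw [val, val, val]
  push_cast
  rw [show ((Matrix.trace A.1 : ℤ) : ℝ) = tR A from rfl]
  linear_combination ((y₁:ℝ) * (y₂:ℝ) / 4) * hs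

include ht in
lemma val_val' (x y : ℚ) :
    val A x y * val' A x y = (x:ℝ)^2 + tR A * x * y + (y:ℝ)^2 := by
  have hs := sqD_sq A ht
  rw [val, val']
  linear_combination (-((y:ℝ)^2) / 4) * hs

lemma val_add_val' (x y : ℚ) : val A x y + val' A x y = 2*(x:ℝ) + (y:ℝ) * tR A := by
  rw [val, val']; ring

lemma val_sub_val' (x y : ℚ) : val A x y - val' A x y = (y:ℝ) * sqD A := by
  rw [val, val']; ring

include ht in
lemma mval_eq {B : SLZ} {x y : ℚ} (hr : Repr A B x y) : mval A B = val A x y := by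
  rw [mval, dif_pos ⟨(x, y), hr⟩]
  have hspec := (⟨(x, y), hr⟩ : ∃ p : ℚ × ℚ, Repr A B p.1 p.2).choose_spec
  obtain ⟨hx, hy⟩ := repr_unique A ht B _ _ _ _ hspec hr
  rw [hx, hy]

include ht in
lemma mval_one : mval A 1 = 1 := by
  rw [mval_eq A ht (repr_one A), val]
  push_cast
  ring

include ht in
lemma mval_mul_val' {B : SLZ} {x y : ℚ} (hr : Repr A B x y) :
    mval A B * val' A x y = 1 := by
  rw [mval_eq A ht hr, val_val' A ht]
  have hn := repr_norm A B x y hr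
  have hq := congrArg (Rat.cast : ℚ → ℝ) hn
  push_cast at hq
  rw [show ((Matrix.trace A.1 : ℤ) : ℝ) = tR A from rfl] at hq
  linear_combination hq

include ht in
lemma mval_ne_zero {B : SLZ} {x y : ℚ} (hr : Repr A B x y) : mval A B ≠ 0 :=
  left_ne_zero_of_mul_eq_one (mval_mul_val' A ht hr)

include ht in
lemma mval_mul {B C : SLZ} {x₁ y₁ x₂ y₂ : ℚ} (h₁ : Repr A B x₁ y₁) (h₂ : Repr A C x₂ y₂) :
    mval A (B * C) = mval A B * mval A C := by
  rw [mval_eq A ht h₁, mval_eq A ht h₂, mval_eq A ht (repr_mul A B C _ _ _ _ h₁ h₂),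
    val_mul A ht]

include ht in
lemma mval_abs_one {B : SLZ} {x y : ℚ} (hr : Repr A B x y) (h1 : |mval A B| = 1) :
    B = 1 ∨ B = -1 := by
  have hμ : mval A B = 1 ∨ mval A B = -1 := by
    rcases abs_cases (mval A B) with ⟨h, _⟩ | ⟨h, _⟩
    · left; rw [← h, h1]
    · right; rw [← neg_eq_iff_eq_neg, ← h, h1]
  have hv' := mval_mul_val' A ht hr
  have hy : y = 0 := by
    have hveq : val' A x y = mval A B := by
      rcases hμ with h | h <;> rw [h] at hv' ⊢ <;> linarith
    have hsub : (y:ℝ) * sqD A = 0 := by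
      have := val_sub_val' A x y
      rw [mval_eq A ht hr] at hveq
      rw [hveq] at this
      linarith
    have hsqD : sqD A ≠ 0 := by linarith [sqD_one_le A ht]
    have : (y:ℝ) = 0 := by
      rcases mul_eq_zero.mp hsub with h | h
      · exact h
      · exact absurd h hsqD
    exact_mod_cast this
  subst hy
  exact repr_pm_one A B x hr

-- commutation closure
lemma comm_one : Comm A 1 := by
  rw [Comm]
  show (1 : Matrix (Fin 2) (Fin 2) ℤ) * A.1 = A.1 * 1
  rw [one_mul, mul_one]

lemma comm_A : Comm A A := rfl

lemma comm_mul {B C : SLZ} (hB : Comm A B) (hC : Comm A C) : Comm A (B * C) := by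
  rw [Comm] at *
  show B.1 * C.1 * A.1 = A.1 * (B.1 * C.1)
  rw [mul_assoc, hC, ← mul_assoc, hB, mul_assoc]

lemma comm_inv {B : SLZ} (hB : Comm A B) : Comm A B⁻¹ := by
  rw [Comm] at *
  have h1 : (B⁻¹ : SLZ).1 * B.1 = 1 := by
    have := congrArg Subtype.val (inv_mul_cancel B)
    exact this
  have h2 : B.1 * (B⁻¹ : SLZ).1 = 1 := by
    have := congrArg Subtype.val (mul_inv_cancel B)
    exact this
  calc (B⁻¹ : SLZ).1 * A.1 = (B⁻¹ : SLZ).1 * A.1 * (B.1 * (B⁻¹ : SLZ).1) := by rw [h2, mul_one]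
    _ = (B⁻¹ : SLZ).1 * (A.1 * B.1) * (B⁻¹ : SLZ).1 := by simp only [mul_assoc]
    _ = (B⁻¹ : SLZ).1 * (B.1 * A.1) * (B⁻¹ : SLZ).1 := by rw [hB]
    _ = ((B⁻¹ : SLZ).1 * B.1) * (A.1 * (B⁻¹ : SLZ).1) := by simp only [mul_assoc]
    _ = A.1 * (B⁻¹ : SLZ).1 := by rw [h1, one_mul]

include ht in
lemma mval_inv_mul {B : SLZ} (hB : Comm A B) : mval A B * mval A B⁻¹ = 1 := by
  obtain ⟨x, y, hr⟩ := exists_repr A ht B hB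
  obtain ⟨x', y', hr'⟩ := exists_repr A ht B⁻¹ (comm_inv A hB)
  rw [← mval_mul A ht hr hr', mul_inv_cancel, mval_one A ht]

include ht in
lemma comm_pow_nat (B : SLZ) (hB : Comm A B) :
    ∀ n : ℕ, Comm A (B ^ n) ∧ Real.log |mval A (B ^ n)| = n * Real.log |mval A B| := by
  intro n
  induction n with
  | zero =>
    refine ⟨by rw [pow_zero]; exact comm_one A, ?_⟩
    rw [pow_zero, mval_one A ht]
    simp
  | succ k ih =>
    obtain ⟨ihc, ihl⟩ := ih
    refine ⟨by rw [pow_succ]; exact comm_mul A ihc hB, ?_⟩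
    rw [pow_succ]
    obtain ⟨x₁, y₁, h₁⟩ := exists_repr A ht _ ihc
    obtain ⟨x₂, y₂, h₂⟩ := exists_repr A ht B hB
    rw [mval_mul A ht h₁ h₂, abs_mul,
      Real.log_mul (by simp [abs_ne_zero]; exact mval_ne_zero A ht h₁)
        (by simp [abs_ne_zero]; exact mval_ne_zero A ht h₂), ihl]
    push_cast
    ring

include ht in
lemma comm_zpow (B : SLZ) (hB : Comm A B) :
    ∀ n : ℤ, Comm A (B ^ n) ∧ Real.log |mval A (B ^ n)| = n * Real.log |mval A B| := by
  intro n
  rcases le_or_gt 0 n with h | h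
  · obtain ⟨m, rfl⟩ := Int.eq_ofNat_of_zero_le h
    rw [zpow_natCast]
    have := comm_pow_nat A ht B hB m
    exact ⟨this.1, by rw [this.2]; push_cast; ring⟩
  · obtain ⟨m, rfl⟩ : ∃ m : ℕ, n = -(m:ℤ) := by
      refine ⟨n.natAbs, ?_⟩
      omega
    rw [_root_.zpow_neg, zpow_natCast]
    obtain ⟨hc, hl⟩ := comm_pow_nat A ht B hB m
    refine ⟨comm_inv A hc, ?_⟩
    have hprod := mval_inv_mul A ht hc
    have h1 : |mval A (B^m)| * |mval A (B^m)⁻¹| = 1 := by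
      rw [← abs_mul, hprod]
      norm_num
    obtain ⟨x, y, hr⟩ := exists_repr A ht _ hc
    have hne : |mval A (B^m)| ≠ 0 := by
      simp [abs_ne_zero]
      exact mval_ne_zero A ht hr
    have : |mval A (B^m)⁻¹| = |mval A (B^m)|⁻¹ := by
      field_simp at h1 ⊢
      linarith [h1]
    rw [this, Real.log_inv, hl]
    push_cast
    ring

end FourAmb
end Part4b
-- Part 4c: the gap, discreteness, and cyclic classification of the commutant
section Part4c
open scoped MatrixGroups
local notation "SLZ" => SL(2, ℤ)
local notation "G" => PSL2Z
namespace FourAmb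

variable (A : SLZ) (ht : 2 < Matrix.trace A.1)

include ht in
lemma mval_gap {B : SLZ} {x y : ℚ} (hr : Repr A B x y) (hB1 : B ≠ 1) (hB2 : B ≠ -1) :
    |mval A B| ≤ 1/2 ∨ 2 ≤ |mval A B| := by
  have hy : y ≠ 0 := by
    intro h
    subst h
    rcases repr_pm_one A B x hr with h | h
    · exact hB1 h
    · exact hB2 h
  have hyR : (y:ℝ) ≠ 0 := by exact_mod_cast hy
  set μ := mval A B with hμdef
  have hμval : μ = val A x y := mval_eq A ht hr
  set μ' := val' A x y with hμ'def
  have hmul : μ * μ' = 1 := mval_mul_val' A ht hr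
  have hsub : μ - μ' = (y:ℝ) * sqD A := by
    rw [hμval]; exact val_sub_val' A x y
  have hadd : μ + μ' = 2*(x:ℝ) + (y:ℝ) * tR A := by
    rw [hμval]; exact val_add_val' A x y
  -- trace of B
  set sZ := Matrix.trace B.1 with hsZ
  have htrB : ((sZ : ℤ) : ℝ) = μ + μ' := by
    have h := repr_trace A B x y hr
    have hq := congrArg (Rat.cast : ℚ → ℝ) h
    push_cast at hq
    rw [hadd]
    rw [show ((Matrix.trace A.1 : ℤ) : ℝ) = tR A from rfl] at hq
    linarith [hq]
  have hid : (μ + μ')^2 = (μ - μ')^2 + 4*(μ*μ') := by ring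
  rw [hsub, hmul] at hid
  have hs2 : ((sZ : ℤ) : ℝ)^2 = (y:ℝ)^2 * sqD A ^2 + 4 := by
    rw [htrB, hid]; ring
  have hy2 : 0 < (y:ℝ)^2 := by
    rcases lt_or_gt_of_ne hyR with h | h <;> nlinarith
  have hs4 : (4:ℝ) < ((sZ : ℤ) : ℝ)^2 := by
    have h5 := hD5 A ht
    have hsq := sqD_sq A ht
    nlinarith [mul_pos hy2 (by linarith : (0:ℝ) < sqD A ^ 2)]
  have hs4' : (4:ℤ) < sZ^2 := by exact_mod_cast hs4
  have hs3 : 3 ≤ sZ ∨ sZ ≤ -3 := by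
    by_contra hcon
    push_neg at hcon
    obtain ⟨h1, h2⟩ := hcon
    nlinarith
  have hs3R : (3:ℝ) ≤ |((sZ : ℤ) : ℝ)| := by
    rcases hs3 with h | h
    · rw [abs_of_nonneg (by exact_mod_cast (by omega : (0:ℤ) ≤ sZ))]
      exact_mod_cast h
    · rw [abs_of_nonpos (by exact_mod_cast (by omega : sZ ≤ (0:ℤ)))]
      have : (sZ:ℝ) ≤ -3 := by exact_mod_cast h
      linarith
  set z := |μ| with hz
  set w := |μ'| with hw
  have hzw : z * w = 1 := by rw [hz, hw, ← abs_mul, hmul, abs_one]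
  have hz0 : 0 < z := by
    rcases le_or_gt z 0 with h | h
    · exfalso
      have : z * w ≤ 0 := by
        have hw0 : 0 ≤ w := abs_nonneg _
        exact mul_nonpos_of_nonpos_of_nonneg h hw0
      linarith
    · exact h
  have hw0 : 0 < w := by nlinarith
  have hsum : 3 ≤ z + w := by
    have : |μ + μ'| ≤ z + w := abs_add_le μ μ'
    rw [← htrB] at *
    linarith [hs3R, this]
  by_contra hcon
  push_neg at hcon
  obtain ⟨h1, h2⟩ := hcon
  -- 1/2 < z < 2
  have k1 : (0:ℝ) < (2*z - 1) * (2 - z) := by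
    apply mul_pos <;> linarith
  have k2 : 3*z ≤ z^2 + 1 := by nlinarith [mul_le_mul_of_nonneg_left hsum (le_of_lt hz0)]
  nlinarith

-- The additive subgroup of logs
noncomputable def LS (ht : 2 < Matrix.trace A.1) : AddSubgroup ℝ where
  carrier := {u | ∃ B : SLZ, Comm A B ∧ Real.log |mval A B| = u}
  zero_mem' := ⟨1, comm_one A, by rw [mval_one A ht]; simp⟩
  add_mem' := by
    rintro u v ⟨B, hB, rfl⟩ ⟨C, hC, rfl⟩
    refine ⟨B * C, comm_mul A hB hC, ?_⟩
    obtain ⟨x₁, y₁, h₁⟩ := exists_repr A ht B hB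
    obtain ⟨x₂, y₂, h₂⟩ := exists_repr A ht C hC
    rw [mval_mul A ht h₁ h₂, abs_mul, Real.log_mul
      (by simp only [abs_ne_zero]; exact mval_ne_zero A ht h₁)
      (by simp only [abs_ne_zero]; exact mval_ne_zero A ht h₂)]
  neg_mem' := by
    rintro u ⟨B, hB, rfl⟩
    refine ⟨B⁻¹, comm_inv A hB, ?_⟩
    have hprod := mval_inv_mul A ht hB
    obtain ⟨x, y, hr⟩ := exists_repr A ht B hB
    have hne : |mval A B| ≠ 0 := by
      simp only [abs_ne_zero]; exact mval_ne_zero A ht hr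
    have h1 : |mval A B| * |mval A B⁻¹| = 1 := by
      rw [← abs_mul, hprod]; norm_num
    have h2 : |mval A B⁻¹| = |mval A B|⁻¹ := by
      field_simp at h1 ⊢
      linarith [h1]
    rw [h2, Real.log_inv]

include ht in
lemma LS_gap : ∀ u ∈ LS A ht, u = 0 ∨ Real.log 2 ≤ |u| := by
  rintro u ⟨B, hB, rfl⟩
  obtain ⟨x, y, hr⟩ := exists_repr A ht B hB
  by_cases h1 : B = 1
  · left; subst h1; rw [mval_one A ht]; simp
  by_cases h2 : B = -1
  · left
    subst h2
    have hrepr : Repr A (-1 : SLZ) (-1) 0 := by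
      have := repr_neg A 1 1 0 (repr_one A)
      simpa using this
    rw [mval_eq A ht hrepr]
    rw [show val A (-1) 0 = -1 by rw [val]; push_cast; ring]
    simp
  right
  have hne : 0 < |mval A B| := by
    rcases (abs_nonneg (mval A B)).lt_or_eq with h | h
    · exact h
    · exfalso
      exact mval_ne_zero A ht hr (abs_eq_zero.mp h.symm)
  rcases mval_gap A ht hr h1 h2 with h | h
  · have : Real.log |mval A B| ≤ Real.log (1/2) := by
      rw [Real.log_le_log_iff hne (by norm_num)]
      exact h
    rw [show (1/2 : ℝ) = 2⁻¹ by norm_num, Real.log_inv] at this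
    have hlog2 : 0 < Real.log 2 := Real.log_pos (by norm_num)
    rw [abs_of_nonpos (by linarith)]
    linarith
  · have : Real.log 2 ≤ Real.log |mval A B| := by
      rw [Real.log_le_log_iff (by norm_num) hne]
      exact h
    have hlog2 : 0 < Real.log 2 := Real.log_pos (by norm_num)
    rw [abs_of_nonneg (by linarith)]
    exact this

include ht in
lemma log_mval_A_pos : 0 < Real.log |mval A A| := by
  have h := mval_eq A ht (repr_A A)
  have hval : val A 0 1 = (tR A + sqD A)/2 := by rw [val]; push_cast; ring
  rw [h, hval]
  have h2 := lam_two_le A ht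
  rw [abs_of_pos (by linarith)]
  apply Real.log_pos
  linarith

include ht in
theorem comm_classified :
    ∃ B₀ : SLZ, Comm A B₀ ∧ ∀ B : SLZ, Comm A B → ∃ n : ℤ, B = B₀ ^ n ∨ B = -(B₀ ^ n) := by
  rcases AddSubgroup.dense_or_cyclic (LS A ht) with hdense | ⟨ℓ, hcyc⟩
  · exfalso
    have hlog2 : 0 < Real.log 2 := Real.log_pos (by norm_num)
    have hx : ((3/4) * Real.log 2) ∈ closure ((LS A ht : Set ℝ)) := hdense _
    rw [Metric.mem_closure_iff] at hx
    obtain ⟨u, hu, hdist⟩ := hx (Real.log 2 / 4) (by linarith)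
    have hd : |(3/4) * Real.log 2 - u| < Real.log 2 / 4 := hdist
    rcases LS_gap A ht u hu with rfl | hgap
    · rw [abs_of_nonneg (by linarith)] at hd
      linarith
    · rw [abs_sub_lt_iff] at hd
      obtain ⟨hd1, hd2⟩ := hd
      rcases abs_cases u with ⟨heq, _⟩ | ⟨heq, _⟩ <;> rw [heq] at hgap <;> linarith
  · have hl : ℓ ∈ LS A ht := by
      rw [hcyc]
      exact AddSubgroup.subset_closure (Set.mem_singleton ℓ)
    obtain ⟨B₀, hB₀c, hB₀l⟩ := hl
    refine ⟨B₀, hB₀c, ?_⟩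
    intro B hB
    have hmem : Real.log |mval A B| ∈ LS A ht := ⟨B, hB, rfl⟩
    rw [hcyc] at hmem
    obtain ⟨n, hn⟩ := AddSubgroup.mem_closure_singleton.mp hmem
    refine ⟨n, ?_⟩
    obtain ⟨hpc, hpl⟩ := comm_zpow A ht B₀ hB₀c n
    have hlogeq : Real.log |mval A (B₀ ^ n)| = Real.log |mval A B| := by
      rw [hpl, hB₀l, ← hn, zsmul_eq_mul]
    -- deduce |mval| equal
    obtain ⟨xb, yb, hrb⟩ := exists_repr A ht B hB
    obtain ⟨xp, yp, hrp⟩ := exists_repr A ht _ hpc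
    have habs : |mval A (B₀ ^ n)| = |mval A B| := by
      have e1 : |mval A (B₀ ^ n)| = Real.exp (Real.log |mval A (B₀ ^ n)|) := by
        rw [Real.exp_log]
        rcases (abs_nonneg (mval A (B₀^n))).lt_or_eq with h | h
        · exact h
        · exact absurd (abs_eq_zero.mp h.symm) (mval_ne_zero A ht hrp)
      have e2 : |mval A B| = Real.exp (Real.log |mval A B|) := by
        rw [Real.exp_log]
        rcases (abs_nonneg (mval A B)).lt_or_eq with h | h
        · exact h
        · exact absurd (abs_eq_zero.mp h.symm) (mval_ne_zero A ht hrb)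
      rw [e1, e2, hlogeq]
    -- C := B * (B₀^n)⁻¹ has |mval| = 1
    set C := B * (B₀ ^ n)⁻¹ with hC
    have hCc : Comm A C := comm_mul A hB (comm_inv A hpc)
    obtain ⟨xc, yc, hrc⟩ := exists_repr A ht C hCc
    have hCB : C * (B₀ ^ n) = B := by
      rw [hC, mul_assoc, inv_mul_cancel, mul_one]
    have hmulC : mval A C * mval A (B₀ ^ n) = mval A B := by
      rw [← mval_mul A ht hrc hrp, hCB]
    have habsC : |mval A C| = 1 := by
      have h1 : |mval A C| * |mval A (B₀ ^ n)| = |mval A B| := by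
        rw [← abs_mul, hmulC]
      rw [habs] at h1
      have hne : |mval A B| ≠ 0 := by
        simp only [abs_ne_zero]; exact mval_ne_zero A ht hrb
      apply mul_right_cancel₀ hne
      rw [one_mul]
      exact h1
    rcases mval_abs_one A ht hrc habsC with h | h
    · left
      rw [← hCB, h, one_mul]
    · right
      rw [← hCB, h, SL_neg_mul, one_mul]

end FourAmb
end Part4c
-- Part 4d: consequences at the PSL level
section Part4d
open scoped MatrixGroups
local notation "SLZ" => SL(2, ℤ)
local notation "G" => PSL2Z
namespace FourAmb

variable (A : SLZ) (ht : 2 < Matrix.trace A.1)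

lemma mk_zpow (X : SLZ) (n : ℤ) :
    (QuotientGroup.mk (X ^ n) : G) = (QuotientGroup.mk X : G) ^ n :=
  map_zpow (QuotientGroup.mk' pmOne) X n

include ht in
lemma mval_neg_one : mval A (-1) = -1 := by
  have hrepr : Repr A (-1 : SLZ) (-1) 0 := by
    have := repr_neg A 1 1 0 (repr_one A)
    simpa using this
  rw [mval_eq A ht hrepr]
  rw [val]
  push_cast
  ring

include ht in
lemma power_injective_sl (n : ℤ) (h : A ^ n = 1 ∨ A ^ n = -1) : n = 0 := by
  obtain ⟨_, hl⟩ := comm_zpow A ht A (comm_A A) n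
  have hzero : Real.log |mval A (A ^ n)| = 0 := by
    rcases h with h | h <;> rw [h]
    · rw [mval_one A ht]; simp
    · rw [mval_neg_one A ht]; simp
  have hpos := log_mval_A_pos A ht
  rw [hzero] at hl
  have : (n:ℝ) = 0 := by
    rcases mul_eq_zero.mp hl.symm with h' | h'
    · exact h'
    · exact absurd h' (ne_of_gt hpos)
  exact_mod_cast this

include ht in
lemma power_injective_G (n : ℤ) (h : (QuotientGroup.mk A : G) ^ n = 1) : n = 0 := by
  apply power_injective_sl A ht n
  have h1 : (QuotientGroup.mk (A ^ n) : G) = QuotientGroup.mk (1 : SLZ) := by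
    rw [mk_zpow, h]; rfl
  rw [mk_eq_mk] at h1
  exact h1

include ht in
lemma comm_of_mk_comm (B : SLZ)
    (h : (QuotientGroup.mk B : G) * QuotientGroup.mk A = QuotientGroup.mk A * QuotientGroup.mk B) :
    Comm A B := by
  have h1 : (QuotientGroup.mk (B * A) : G) = QuotientGroup.mk (A * B) := h
  rw [mk_eq_mk] at h1
  rcases h1 with h1 | h1
  · exact congrArg Subtype.val h1
  · exfalso
    -- B*A = -(A*B) ⇒ conjugate of A is -A ⇒ trace A = 0
    have h2 : B * A * B⁻¹ = -A := by
      rw [h1, SL_neg_mul, mul_assoc, mul_inv_cancel, mul_one]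
    have h3 : Matrix.trace ((B * A * B⁻¹ : SLZ)).1 = Matrix.trace A.1 := by
      have e : ((B * A * B⁻¹ : SLZ)).1 = B.1 * (A.1 * (B⁻¹ : SLZ).1) := by
        show B.1 * A.1 * (B⁻¹ : SLZ).1 = _
        rw [mul_assoc]
      rw [e, Matrix.trace_mul_comm, mul_assoc]
      have : (B⁻¹ : SLZ).1 * B.1 = 1 := congrArg Subtype.val (inv_mul_cancel B)
      rw [this, mul_one]
    rw [h2] at h3
    have h4 : Matrix.trace ((-A : SLZ)).1 = -Matrix.trace A.1 := by
      rw [Matrix.SpecialLinearGroup.coe_neg, Matrix.trace_neg]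
    rw [h4] at h3
    omega

include ht in
theorem centralizer_G (hprim : IsPrim (QuotientGroup.mk A : G)) :
    ∀ β : G, β * QuotientGroup.mk A = QuotientGroup.mk A * β →
      β ∈ Subgroup.zpowers (QuotientGroup.mk A : G) := by
  obtain ⟨B₀, hB₀c, hcl⟩ := comm_classified A ht
  -- A itself is a power of B₀
  obtain ⟨k, hk⟩ := hcl A (comm_A A)
  have hmkA : (QuotientGroup.mk A : G) = (QuotientGroup.mk B₀ : G) ^ k := by
    rcases hk with h | h
    · rw [h, mk_zpow]
    · rw [h, ← mk_zpow]
      exact mk_neg _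
  have hk0 : k ≠ 0 := by
    intro h0
    subst h0
    simp only [zpow_zero] at hmkA
    have : A = 1 ∨ A = -1 := by
      rw [show (1 : G) = QuotientGroup.mk (1 : SLZ) from rfl] at hmkA
      rw [← mk_eq_mk]
      exact hmkA
    rcases this with rfl | rfl
    · have : Matrix.trace ((1 : SLZ)).1 = 2 := by
        rw [Matrix.SpecialLinearGroup.coe_one, Matrix.trace_one]
        rfl
      omega
    · have : Matrix.trace ((-1 : SLZ)).1 = -2 := by
        rw [Matrix.SpecialLinearGroup.coe_neg, Matrix.trace_neg,
          Matrix.SpecialLinearGroup.coe_one, Matrix.trace_one]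
        rfl
      omega
  have hk1 : k = 1 ∨ k = -1 := by
    by_contra hcon
    push_neg at hcon
    obtain ⟨hne1, hne2⟩ := hcon
    rcases Int.lt_or_lt_of_ne hk0 with h | h
    · -- k < 0, k ≠ -1 so k ≤ -2
      apply hprim
      refine ⟨(QuotientGroup.mk B₀ : G)⁻¹, (-k).toNat, by omega, ?_⟩
      rw [inv_pow, ← zpow_natCast, Int.toNat_of_nonneg (by omega : 0 ≤ -k), ← _root_.zpow_neg, neg_neg, ← hmkA]
    · apply hprim
      refine ⟨(QuotientGroup.mk B₀ : G), k.toNat, by omega, ?_⟩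
      rw [← zpow_natCast, Int.toNat_of_nonneg (by omega : 0 ≤ k), ← hmkA]
  intro β hβ
  obtain ⟨B, rfl⟩ := QuotientGroup.mk_surjective β
  have hBc : Comm A B := comm_of_mk_comm A ht B hβ
  obtain ⟨n, hn⟩ := hcl B hBc
  have hmkB : (QuotientGroup.mk B : G) = (QuotientGroup.mk B₀ : G) ^ n := by
    rcases hn with h | h
    · rw [h, mk_zpow]
    · rw [h, ← mk_zpow]
      exact mk_neg _
  rcases hk1 with rfl | rfl
  · rw [zpow_one] at hmkA
    rw [hmkA, hmkB]
    exact Subgroup.zpow_mem _ (Subgroup.mem_zpowers _) n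
  · have : (QuotientGroup.mk B₀ : G) = (QuotientGroup.mk A : G)⁻¹ := by
      rw [hmkA, _root_.zpow_neg, zpow_one, inv_inv]
    rw [hmkB, this, _root_.inv_zpow]
    exact Subgroup.inv_mem _ (Subgroup.zpow_mem _ (Subgroup.mem_zpowers _) n)

end FourAmb
end Part4d
-- Part 5: main assembly
section Part5
open scoped MatrixGroups
local notation "SLZ" => SL(2, ℤ)
local notation "G" => PSL2Z
namespace FourAmb

lemma trace_conj_sl (P X : SLZ) : Matrix.trace ((P * X * P⁻¹ : SLZ)).1 = Matrix.trace X.1 := by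
  have e : ((P * X * P⁻¹ : SLZ)).1 = P.1 * (X.1 * (P⁻¹ : SLZ).1) := by
    show P.1 * X.1 * (P⁻¹ : SLZ).1 = _
    rw [mul_assoc]
  rw [e, Matrix.trace_mul_comm, mul_assoc]
  have h1 : (P⁻¹ : SLZ).1 * P.1 = 1 := congrArg Subtype.val (inv_mul_cancel P)
  rw [h1, mul_one]

lemma amb1_neg {X : SLZ} (h : Amb1 X) : Amb1 (-X) := by
  have h' := amb1_plus h
  rw [Amb1, Wmat_inv]
  left
  rw [Matrix.SpecialLinearGroup.coe_neg, SL_inv_neg, Matrix.SpecialLinearGroup.coe_neg,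
    mul_neg, neg_mul, h']

lemma isPrim_of_conj {x y : G} (h : IsConj x y) (hp : IsPrim x) : IsPrim y := by
  rintro ⟨δ, n, hn, hδ⟩
  obtain ⟨c, hc⟩ := isConj_iff.mp h
  apply hp
  refine ⟨c⁻¹ * δ * c, n, hn, ?_⟩
  have hx : x = c⁻¹ * y * c := by rw [← hc]; group
  have key : ∀ k : ℕ, (c⁻¹ * δ * c) ^ k = c⁻¹ * δ ^ k * c := by
    intro k
    induction k with
    | zero => group
    | succ j ih => rw [pow_succ, pow_succ, ih]; group
  rw [hx, ← hδ, key]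

lemma sigma_zpow {γb : G} (hσ : sigma γb = γb⁻¹) (n : ℤ) : sigma (γb ^ n) = γb ^ (-n) := by
  rw [map_zpow, hσ, _root_.inv_zpow, ← _root_.zpow_neg]

theorem four_ambiguous_conjugates' (γ : PSL2Z) (hprim : IsPrim γ) (hhyp : IsHyp γ)
    (h1 : ∃ δ : PSL2Z, IsConj γ δ ∧ AmbFst δ)
    (h2 : ¬ ∃ δ : PSL2Z, IsConj γ δ ∧ AmbSnd δ) :
    {δ : PSL2Z | IsConj γ δ ∧ AmbFst δ}.ncard = 4 := by
  classical
  obtain ⟨δ₀, hconj0, A₁, hA₁mk, hA₁⟩ := h1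
  obtain ⟨A₀, hA₀mk, hA₀tr⟩ := hhyp
  have htr1 : 2 < |Matrix.trace A₁.1| := by
    obtain ⟨c, hc⟩ := isConj_iff.mp hconj0
    obtain ⟨P, rfl⟩ := QuotientGroup.mk_surjective c
    have : (QuotientGroup.mk (P * A₀ * P⁻¹) : G) = QuotientGroup.mk A₁ := by
      rw [show (QuotientGroup.mk (P * A₀ * P⁻¹) : G)
          = QuotientGroup.mk P * QuotientGroup.mk A₀ * (QuotientGroup.mk P)⁻¹ from rfl]
      rw [hA₀mk, hc, hA₁mk]
    rw [mk_eq_mk] at this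
    rcases this with h | h
    · rw [← h, trace_conj_sl]
      exact hA₀tr
    · have : A₁ = -(P * A₀ * P⁻¹) := by rw [h, SL_neg_neg]
      rw [this, Matrix.SpecialLinearGroup.coe_neg, Matrix.trace_neg, abs_neg, trace_conj_sl]
      exact hA₀tr
  obtain ⟨A, hAmk, hAmb, htA⟩ :
      ∃ A : SLZ, (QuotientGroup.mk A : G) = δ₀ ∧ Amb1 A ∧ 2 < Matrix.trace A.1 := by
    rcases le_or_gt 0 (Matrix.trace A₁.1) with h | h
    · exact ⟨A₁, hA₁mk, hA₁, by rw [abs_of_nonneg h] at htr1; exact htr1⟩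
    · refine ⟨-A₁, by rw [mk_neg]; exact hA₁mk, amb1_neg hA₁, ?_⟩
      rw [Matrix.SpecialLinearGroup.coe_neg, Matrix.trace_neg]
      rw [abs_of_neg h] at htr1
      omega
  set γb : G := QuotientGroup.mk A with hγb
  have hconjA : IsConj γ γb := by rw [hAmk]; exact hconj0
  have hprimA : IsPrim γb := isPrim_of_conj hconjA hprim
  have hσ : sigma γb = γb⁻¹ := (ambFst_iff γb).mp ⟨A, rfl, hAmb⟩
  have hcent : ∀ β : G, β * γb = γb * β → β ∈ Subgroup.zpowers γb :=
    centralizer_G A htA hprimA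
  have hpow : ∀ n : ℤ, γb ^ n = 1 → n = 0 := power_injective_G A htA
  have hzeq : ∀ a b : ℤ, γb ^ a = γb ^ b → a = b := by
    intro a b hab
    have h0 : γb ^ (a - b) = 1 := by
      rw [_root_.zpow_sub, hab, mul_inv_cancel]
    have := hpow _ h0
    omega
  -- matrix-level setup
  set Am : Matrix (Fin 2) (Fin 2) ℤ := A.1 with hAm
  set Ai : Matrix (Fin 2) (Fin 2) ℤ := ((A⁻¹ : SLZ)).1 with hAi
  have hW : Wmat * Am * Wmat = Ai := amb1_plus hAmb
  have hAiAm : Ai * Am = 1 := congrArg Subtype.val (inv_mul_cancel A)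
  set M : Matrix (Fin 2) (Fin 2) ℤ := Wmat * Am with hM
  have hMdet : M.det = -1 := by
    rw [hM, Matrix.det_mul]
    have hq1 : Wmat.det = -1 := by rw [Wmat_def, Matrix.det_fin_two_of]; ring
    have hq2 : Am.det = 1 := A.2
    rw [hq1, hq2]
    ring
  have hMsq : M * M = 1 := by
    rw [hM, ← mul_assoc, hW]
    exact hAiAm
  have hmam : M * Am * M = Ai := by
    rw [hM]
    have e : Wmat * Am * Am * (Wmat * Am) = (Wmat * Am * Wmat) * ((Wmat * Am * Wmat) * Am) := by
      simp only [mul_assoc]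
      congr 1
      congr 1
      rw [← mul_assoc Wmat Wmat, Wmat_mul_Wmat, one_mul]
    rw [e, hW, hAiAm, mul_one]
  obtain ⟨P, hP⟩ := inv_classify M hMdet hMsq
  have hPc : (P⁻¹ : SLZ).1 * P.1 = 1 := congrArg Subtype.val (inv_mul_cancel P)
  have hPc' : P.1 * (P⁻¹ : SLZ).1 = 1 := congrArg Subtype.val (mul_inv_cancel P)
  have hW1case : (P.1 * M * (P⁻¹ : SLZ).1 = W1mat ∨ P.1 * M * (P⁻¹ : SLZ).1 = -W1mat) → False := by
    intro hcase
    apply h2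
    set B : SLZ := P * A * P⁻¹ with hB
    have hBm : B.1 = P.1 * Am * (P⁻¹ : SLZ).1 := rfl
    have hBi : ((B⁻¹ : SLZ)).1 = P.1 * Ai * (P⁻¹ : SLZ).1 := by
      have e : B⁻¹ = P * A⁻¹ * P⁻¹ := by rw [hB]; group
      rw [e]; rfl
    have hkey : (P.1 * M * (P⁻¹ : SLZ).1) * B.1 * (P.1 * M * (P⁻¹ : SLZ).1)
        = ((B⁻¹ : SLZ)).1 := by
      rw [hBm, hBi]
      have hcanc : ∀ X : Matrix (Fin 2) (Fin 2) ℤ, (P⁻¹ : SLZ).1 * (P.1 * X) = X := by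
        intro X
        rw [← mul_assoc, hPc, one_mul]
      have hmam' : ∀ X : Matrix (Fin 2) (Fin 2) ℤ, M * (Am * (M * X)) = Ai * X := by
        intro X
        rw [show M * (Am * (M * X)) = (M * Am * M) * X by simp only [mul_assoc], hmam]
      simp only [mul_assoc, hcanc, hmam']
    have hamb2 : Amb2 B := by
      left
      rw [W1mat_inv]
      rcases hcase with h | h
      · rw [← h]; exact hkey
      · have hW1 : W1mat = -(P.1 * M * (P⁻¹ : SLZ).1) := by rw [h, neg_neg]
        rw [hW1]
        simp only [neg_mul, mul_neg, neg_neg]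
        exact hkey
    refine ⟨QuotientGroup.mk B, ?_, B, rfl, hamb2⟩
    apply hconjA.trans
    apply isConj_iff.mpr
    exact ⟨QuotientGroup.mk P, rfl⟩
  have hWcase : P.1 * M * (P⁻¹ : SLZ).1 = Wmat ∨ P.1 * M * (P⁻¹ : SLZ).1 = -Wmat := by
    rcases hP with h | h | h | h
    · left; exact h
    · right; exact h
    · exact absurd (Or.inl h) hW1case
    · exact absurd (Or.inr h) hW1case
  set p : G := QuotientGroup.mk P with hp
  have hgA : γb = sigma p⁻¹ * p := by
    have hback : Wmat * Am = (P⁻¹ : SLZ).1 * (P.1 * M * (P⁻¹ : SLZ).1) * P.1 := by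
      rw [hM]
      have hcanc : ∀ X : Matrix (Fin 2) (Fin 2) ℤ, (P⁻¹ : SLZ).1 * (P.1 * X) = X := by
        intro X
        rw [← mul_assoc, hPc, one_mul]
      simp only [mul_assoc, hcanc]
      rw [show (P⁻¹ : SLZ).1 * P.1 = 1 from hPc]
      rw [mul_one]
    have hAm_eq : ∀ N : Matrix (Fin 2) (Fin 2) ℤ, Wmat * Am = N → Am = Wmat * N := by
      intro N h
      rw [← h, ← mul_assoc, Wmat_mul_Wmat, one_mul]
    rcases hWcase with h | h
    · rw [h] at hback
      have e : Am = Wmat * ((P⁻¹ : SLZ).1 * Wmat * P.1) := hAm_eq _ hback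
      have hsl : A = wConj P⁻¹ * P := by
        apply Subtype.ext
        show Am = (wConj P⁻¹).1 * P.1
        rw [e, wConj_coe]
        show Wmat * ((P⁻¹ : SLZ).1 * Wmat * P.1) = Wmat * (P⁻¹ : SLZ).1 * Wmat * P.1
        simp only [mul_assoc]
      rw [hγb, hsl]
      rfl
    · rw [h] at hback
      have h' : Wmat * Am = -((P⁻¹ : SLZ).1 * Wmat * P.1) := by
        rw [hback]
        simp only [mul_neg, neg_mul]
      have e : Am = -(Wmat * ((P⁻¹ : SLZ).1 * Wmat * P.1)) := by
        have := hAm_eq _ h'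
        rw [this, mul_neg]
      have hsl : A = -(wConj P⁻¹ * P) := by
        apply Subtype.ext
        rw [Matrix.SpecialLinearGroup.coe_neg]
        show Am = -((wConj P⁻¹).1 * P.1)
        rw [e, wConj_coe]
        show -(Wmat * ((P⁻¹ : SLZ).1 * Wmat * P.1)) = -(Wmat * (P⁻¹ : SLZ).1 * Wmat * P.1)
        simp only [mul_assoc]
      rw [hγb, hsl, mk_neg]
      rfl
  obtain ⟨g, hgdef⟩ : ∃ g : G, g = p⁻¹ := ⟨_, rfl⟩
  have hgA' : γb = sigma g * p := by rw [hgdef]; exact hgA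
  have hgrel : sigma g = γb * g := by
    rw [hgA', hgdef, mul_assoc, mul_inv_cancel, mul_one]
  obtain ⟨g₂, hg₂def⟩ : ∃ x : G, x = g⁻¹ * γb⁻¹ := ⟨_, rfl⟩
  have hg₂rel : sigma g₂ = g₂ * γb := by
    rw [hg₂def, _root_.map_mul, _root_.map_inv, _root_.map_inv, hgrel, hσ]
    group
  set sb : G := QuotientGroup.mk Ssl with hsb
  have hsσ : sigma sb = sb := sigma_sbar
  have hssq : sb * sb = 1 := sbar_sq
  have hsne : sb ≠ 1 := sbar_ne_one
  have hsbinv : sb⁻¹ = sb := inv_eq_of_mul_eq_one_right hssq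
  set d1 : G := sb * γb * sb⁻¹ with hd1
  set d2 : G := g₂ * γb * g₂⁻¹ with hd2
  set d3 : G := (sb * g₂) * γb * (sb * g₂)⁻¹ with hd3
  have hconj_eq : ∀ u v : G, u * γb * u⁻¹ = v * γb * v⁻¹ → ∃ n : ℤ, γb ^ n = v⁻¹ * u := by
    intro u v h
    apply Subgroup.mem_zpowers_iff.mp
    apply hcent
    have h' : (v⁻¹ * u) * γb * (v⁻¹ * u)⁻¹ = γb := by
      calc (v⁻¹ * u) * γb * (v⁻¹ * u)⁻¹ = v⁻¹ * (u * γb * u⁻¹) * v := by group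
        _ = v⁻¹ * (v * γb * v⁻¹) * v := by rw [h]
        _ = γb := by group
    exact mul_inv_eq_iff_eq_mul.mp h'
  -- distinctness
  have hne01 : γb ≠ d1 := by
    intro h
    obtain ⟨n, hn⟩ := hconj_eq 1 sb
      (by rw [one_mul, inv_one, mul_one, ← hd1]; exact h)
    rw [mul_one] at hn
    have hsb' : γb ^ (-n) = sb := by rw [_root_.zpow_neg, hn, inv_inv]
    have h0 : γb ^ (-n + -n) = 1 := by rw [_root_.zpow_add, hsb', hssq]
    have hn0 := hpow _ h0
    apply hsne
    rw [← hsb', show -n = 0 by omega, _root_.zpow_zero]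
  have hne02 : γb ≠ d2 := by
    intro h
    obtain ⟨n, hn⟩ := hconj_eq 1 g₂
      (by rw [one_mul, inv_one, mul_one, ← hd2]; exact h)
    rw [mul_one] at hn
    have hg₂' : g₂ = γb ^ (-n) := by rw [_root_.zpow_neg, hn, inv_inv]
    have hcontra : sigma g₂ = γb ^ n := by rw [hg₂', sigma_zpow hσ, neg_neg]
    rw [hg₂rel, hg₂'] at hcontra
    have : γb ^ (-n + 1) = γb ^ n := by
      rw [_root_.zpow_add, _root_.zpow_one]
      exact hcontra
    have := hzeq _ _ this
    omega
  have hne03 : γb ≠ d3 := by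
    intro h
    obtain ⟨n, hn⟩ := hconj_eq 1 (sb * g₂)
      (by rw [one_mul, inv_one, mul_one, ← hd3]; exact h)
    rw [mul_one] at hn
    have hsg' : sb * g₂ = γb ^ (-n) := by rw [_root_.zpow_neg, hn, inv_inv]
    have hσsg : sigma (sb * g₂) = (sb * g₂) * γb := by
      rw [_root_.map_mul, hsσ, hg₂rel]
      group
    have hcontra : sigma (sb * g₂) = γb ^ n := by rw [hsg', sigma_zpow hσ, neg_neg]
    rw [hσsg, hsg'] at hcontra
    have : γb ^ (-n + 1) = γb ^ n := by
      rw [_root_.zpow_add, _root_.zpow_one]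
      exact hcontra
    have := hzeq _ _ this
    omega
  have hne12 : d1 ≠ d2 := by
    intro h
    obtain ⟨n, hn⟩ := hconj_eq sb g₂ (by rw [← hd1, ← hd2]; exact h)
    have hsb' : sb = g₂ * γb ^ n := by
      rw [hn]
      group
    have h1 : sb = g₂ * γb * γb ^ (-n) := by
      conv_lhs => rw [← hsσ, hsb']
      rw [_root_.map_mul, sigma_zpow hσ, hg₂rel]
    have h2 : γb ^ n = γb ^ (1 + -n) := by
      have h3 : g₂ * γb ^ n = g₂ * γb * γb ^ (-n) := hsb'.symm.trans h1
      rw [_root_.zpow_add, _root_.zpow_one]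
      exact mul_left_cancel (by rw [← mul_assoc]; exact h3)
    have := hzeq _ _ h2
    omega
  have hne13 : d1 ≠ d3 := by
    intro h
    obtain ⟨n, hn⟩ := hconj_eq sb (sb * g₂) (by rw [← hd1, ← hd3]; exact h)
    have hg₂' : γb ^ n = g₂⁻¹ := by
      rw [hn]
      group
    have hg₂'' : g₂ = γb ^ (-n) := by rw [_root_.zpow_neg, hg₂', inv_inv]
    have hcontra : sigma g₂ = γb ^ n := by rw [hg₂'', sigma_zpow hσ, neg_neg]
    rw [hg₂rel, hg₂''] at hcontra
    have : γb ^ (-n + 1) = γb ^ n := by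
      rw [_root_.zpow_add, _root_.zpow_one]
      exact hcontra
    have := hzeq _ _ this
    omega
  have hne23 : d2 ≠ d3 := by
    intro h
    obtain ⟨n, hn⟩ := hconj_eq g₂ (sb * g₂) (by rw [← hd2, ← hd3]; exact h)
    have hw : γb ^ n = g₂⁻¹ * (sb⁻¹ * g₂) := by
      rw [hn]
      group
    have hsq' : γb ^ (n + n) = 1 := by
      rw [_root_.zpow_add, hw]
      calc g₂⁻¹ * (sb⁻¹ * g₂) * (g₂⁻¹ * (sb⁻¹ * g₂))
          = g₂⁻¹ * (sb⁻¹ * sb⁻¹) * g₂ := by group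
        _ = 1 := by rw [hsbinv, hssq]; group
    have hn0 := hpow _ hsq'
    have hn0' : n = 0 := by omega
    subst hn0'
    rw [_root_.zpow_zero] at hw
    apply hsne
    have : sb⁻¹ = g₂ * g₂⁻¹ := by
      rw [eq_comm]
      calc g₂ * g₂⁻¹ = g₂ * (g₂⁻¹ * (sb⁻¹ * g₂)) * g₂⁻¹ := by rw [← hw]; group
        _ = sb⁻¹ := by group
    rw [← hsbinv, this]
    group
  -- the set equality
  have hset : {δ : G | IsConj γ δ ∧ AmbFst δ} = {γb, d1, d2, d3} := by
    ext δ
    simp only [Set.mem_setOf_eq, Set.mem_insert_iff, Set.mem_singleton_iff]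
    constructor
    · rintro ⟨hcj, hamb⟩
      have hcjb : IsConj γb δ := hconjA.symm.trans hcj
      obtain ⟨c, hc⟩ := isConj_iff.mp hcjb
      have hambσ := (ambFst_iff δ).mp hamb
      rw [← hc] at hambσ
      simp only [_root_.map_mul, _root_.map_inv, hσ] at hambσ
      -- hambσ : σc * γb⁻¹ * (σc)⁻¹ = (c * γb * c⁻¹)⁻¹
      have e1 : sigma c * γb⁻¹ * (sigma c)⁻¹ = c * γb⁻¹ * c⁻¹ := by
        rw [hambσ]
        group
      obtain ⟨k, hk⟩ : ∃ k : ℤ, γb ^ k = c⁻¹ * sigma c := by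
        apply Subgroup.mem_zpowers_iff.mp
        apply hcent
        have h' : (c⁻¹ * sigma c) * γb⁻¹ * (c⁻¹ * sigma c)⁻¹ = γb⁻¹ := by
          calc (c⁻¹ * sigma c) * γb⁻¹ * (c⁻¹ * sigma c)⁻¹
              = c⁻¹ * (sigma c * γb⁻¹ * (sigma c)⁻¹) * c := by group
            _ = c⁻¹ * (c * γb⁻¹ * c⁻¹) * c := by rw [e1]
            _ = γb⁻¹ := by group
        have h'' : (c⁻¹ * sigma c) * γb * (c⁻¹ * sigma c)⁻¹ = γb := by
          calc (c⁻¹ * sigma c) * γb * (c⁻¹ * sigma c)⁻¹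
              = ((c⁻¹ * sigma c) * γb⁻¹ * (c⁻¹ * sigma c)⁻¹)⁻¹ := by group
            _ = (γb⁻¹)⁻¹ := by rw [h']
            _ = γb := by group
        exact mul_inv_eq_iff_eq_mul.mp h''
      have hσc : sigma c = c * γb ^ k := by rw [hk]; group
      rcases Int.even_or_odd k with ⟨m, hm⟩ | ⟨m, hm⟩
      · -- even
        have hu' : sigma (c * γb ^ m) = c * γb ^ m := by
          rw [_root_.map_mul, sigma_zpow hσ, hσc, mul_assoc, ← _root_.zpow_add,
            show k + -m = m by omega]
        have hdelta : δ = (c * γb ^ m) * γb * (c * γb ^ m)⁻¹ := by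
          rw [← hc]
          group
        rcases fix_sigma hu' with h' | h'
        · left
          rw [hdelta, h']
          group
        · right; left
          rw [hd1, hdelta, h']
      · -- odd
        have hu' : sigma (c * γb ^ m) = (c * γb ^ m) * γb := by
          rw [_root_.map_mul, sigma_zpow hσ, hσc, mul_assoc, ← _root_.zpow_add,
            show k + -m = m + 1 by omega, mul_assoc, _root_.zpow_add, _root_.zpow_one]
        have hw : sigma ((c * γb ^ m) * g₂⁻¹) = (c * γb ^ m) * g₂⁻¹ := by
          rw [_root_.map_mul, _root_.map_inv, hu', hg₂rel]
          group
        have hdelta : δ = (c * γb ^ m) * γb * (c * γb ^ m)⁻¹ := by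
          rw [← hc]
          group
        rcases fix_sigma hw with h' | h'
        · right; right; left
          have hu'' : c * γb ^ m = g₂ := by
            have := mul_inv_eq_one.mp h'
            exact this
          rw [hd2, hdelta, hu'']
        · right; right; right
          have hu'' : c * γb ^ m = sb * g₂ := by
            have := mul_inv_eq_iff_eq_mul.mp h'
            rw [this]
          rw [hd3, hdelta, hu'']
    · rintro (rfl | rfl | rfl | rfl)
      · exact ⟨hconjA, (ambFst_iff _).mpr hσ⟩
      · refine ⟨hconjA.trans (isConj_iff.mpr ⟨sb, rfl⟩), (ambFst_iff _).mpr ?_⟩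
        rw [hd1, _root_.map_mul, _root_.map_mul, _root_.map_inv, hsσ, hσ]
        group
      · refine ⟨hconjA.trans (isConj_iff.mpr ⟨g₂, rfl⟩), (ambFst_iff _).mpr ?_⟩
        rw [hd2, _root_.map_mul, _root_.map_mul, _root_.map_inv, hg₂rel, hσ]
        group
      · refine ⟨hconjA.trans (isConj_iff.mpr ⟨sb * g₂, rfl⟩), (ambFst_iff _).mpr ?_⟩
        rw [hd3, _root_.map_mul, _root_.map_mul, _root_.map_inv, _root_.map_mul, hsσ, hg₂rel, hσ]
        group
  rw [hset]
  rw [Set.ncard_insert_of_notMem (by simp [hne01, hne02, hne03]),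
    Set.ncard_insert_of_notMem (by simp [hne12, hne13]),
    Set.ncard_insert_of_notMem (by simp [hne23]),
    Set.ncard_singleton]

end FourAmb
end Part5

/-- Lemma 12(iv), first claim: if `γ ∈ PSL₂(ℤ)` is primitive hyperbolic, conjugate to
an element ambiguous of the first kind but not conjugate to any element ambiguous of
the second kind, then exactly `4` elements of its conjugacy class are ambiguous of the
first kind. -/
theorem four_ambiguous_conjugates (γ : PSL2Z) (hprim : IsPrim γ) (hhyp : IsHyp γ)
    (h1 : ∃ δ : PSL2Z, IsConj γ δ ∧ AmbFst δ)
    (h2 : ¬ ∃ δ : PSL2Z, IsConj γ δ ∧ AmbSnd δ) :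
    {δ : PSL2Z | IsConj γ δ ∧ AmbFst δ}.ncard = 4 := by
  exact FourAmb.four_ambiguous_conjugates' γ hprim hhyp h1 h2
end
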